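/- arXiv:2210.16106 — 12 statements merged into one kernel-verified Lean document; each statement's English description precedes it below -/
import Mathlib

section
/- Suppose x follows the planar circular-field dynamics. Then the auxiliary states R(t) = x(t)·ẋ(t) and S(t) = (x(t)×ẋ(t))·b are differentiable and satisfy, for all t ≥ 0, R'(t) = kcf·R(t)·S(t)/(R(t)² + S(t)²) + ‖ẋ(t)‖² and S'(t) = −kcf·R(t)²/(R(t)² + S(t)²). -/
open scoped RealInnerProductSpace

/-- The cross product on `ℝ³`. -/
noncomputable def cross (a b : EuclideanSpace ℝ (Fin 3)) : EuclideanSpace ℝ (Fin 3) :=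
  (EuclideanSpace.equiv (Fin 3) ℝ).symm
    ![a 1 * b 2 - a 2 * b 1, a 2 * b 0 - a 0 * b 2, a 0 * b 1 - a 1 * b 0]

/-!
Along the motion, `Ṙ = ‖ẋ‖² + ⟪x, ẍ⟫` and `Ṡ = ⟪x × ẍ, b⟫`. For an acceleration `ẍ = c • (ẋ × b)`
the triple product gives `⟪x, ẍ⟫ = c S`, and `x × (ẋ × b) = -R b` (as `x ⊥ b`) gives `Ṡ = -c R`.
Since `x × ẋ` is parallel to the unit normal `b` of the plane of motion, Lagrange's identity
reads `R² + S² = ‖x‖² ‖ẋ‖²`, which turns the gain `c` of the circular field into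
`kcf R / (R² + S²)`.
-/

open WithLp Matrix

local notation "E³" => EuclideanSpace ℝ (Fin 3)

theorem cross_eq_toLp_crossProduct (u w : E³) : cross u w = toLp 2 (ofLp u ⨯₃ ofLp w) := rfl

theorem real_inner_eq_dotProduct (u w : E³) : ⟪u, w⟫ = ofLp u ⬝ᵥ ofLp w := by
  rw [EuclideanSpace.inner_eq_star_dotProduct, star_trivial, dotProduct_comm]

theorem cross_self_eq_zero (u : E³) : cross u u = 0 := by
  rw [cross_eq_toLp_crossProduct, cross_self]
  rfl

theorem cross_smul_right (u w : E³) (c : ℝ) : cross u (c • w) = c • cross u w := by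
  simp only [cross_eq_toLp_crossProduct, ofLp_smul, map_smul]
  rfl

theorem inner_cross_left (u w z : E³) : ⟪cross u w, z⟫ = ⟪u, cross w z⟫ := by
  simp only [real_inner_eq_dotProduct, cross_eq_toLp_crossProduct]
  rw [dotProduct_comm, triple_product_permutation, dotProduct_comm]

theorem cross_cross_right (u w z : E³) : cross u (cross w z) = ⟪u, z⟫ • w - ⟪w, u⟫ • z := by
  simp only [real_inner_eq_dotProduct, cross_eq_toLp_crossProduct, cross_cross_eq_smul_sub_smul']
  rfl

theorem norm_cross_sq (u w : E³) : ‖cross u w‖ ^ 2 = ‖u‖ ^ 2 * ‖w‖ ^ 2 - ⟪u, w⟫ ^ 2 := by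
  simp only [← real_inner_self_eq_norm_sq, real_inner_eq_dotProduct, cross_eq_toLp_crossProduct,
    cross_dot_cross]
  rw [dotProduct_comm (ofLp w) (ofLp u)]
  ring

theorem inner_sq_add_inner_cross_sq_of_orthogonal {b u w : E³} (hb : ‖b‖ = 1)
    (hbu : ⟪b, u⟫ = 0) (hbw : ⟪b, w⟫ = 0) :
    ⟪u, w⟫ ^ 2 + ⟪cross u w, b⟫ ^ 2 = ‖u‖ ^ 2 * ‖w‖ ^ 2 := by
  have hparallel : cross b (cross u w) = 0 := by
    simp [cross_cross_right, hbu, hbw, real_inner_comm]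
  have hb_cross := norm_cross_sq b (cross u w)
  rw [hparallel, norm_zero, hb, real_inner_comm] at hb_cross
  linear_combination hb_cross + norm_cross_sq u w

noncomputable def crossCLM : E³ →L[ℝ] E³ →L[ℝ] E³ :=
  LinearMap.toContinuousLinearMap
    ((LinearMap.toContinuousLinearMap : (E³ →ₗ[ℝ] E³) ≃ₗ[ℝ] E³ →L[ℝ] E³).toLinearMap ∘ₗ
      (crossProduct.compl₁₂ (WithLp.linearEquiv 2 ℝ (Fin 3 → ℝ)).toLinearMap
        (WithLp.linearEquiv 2 ℝ (Fin 3 → ℝ)).toLinearMap).compr₂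
        (WithLp.linearEquiv 2 ℝ (Fin 3 → ℝ)).symm.toLinearMap)

theorem HasDerivAt.cross {f g : ℝ → E³} {f' g' : E³} {t : ℝ} (hf : HasDerivAt f f' t)
    (hg : HasDerivAt g g' t) :
    HasDerivAt (fun s => cross (f s) (g s)) (cross (f t) g' + cross f' (g t)) t :=
  crossCLM.hasDerivAt_of_bilinear (fun _ => hf) (fun _ => hg)

section AccelerationAlongCross

variable {x v : ℝ → E³} {b : E³} {c t : ℝ}

theorem hasDerivAt_inner_of_accel_eq_smul_cross (hx : HasDerivAt x (v t) t)
    (hv : HasDerivAt v (c • cross (v t) b) t) :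
    HasDerivAt (fun s => ⟪x s, v s⟫) (c * ⟪cross (x t) (v t), b⟫ + ‖v t‖ ^ 2) t := by
  refine (hx.inner ℝ hv).congr_deriv ?_
  rw [inner_smul_right, ← inner_cross_left, real_inner_self_eq_norm_sq]

theorem hasDerivAt_inner_cross_of_accel_eq_smul_cross (hb : ‖b‖ = 1) (hbx : ⟪b, x t⟫ = 0)
    (hx : HasDerivAt x (v t) t) (hv : HasDerivAt v (c • cross (v t) b) t) :
    HasDerivAt (fun s => ⟪cross (x s) (v s), b⟫) (-(c * ⟪x t, v t⟫)) t := by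
  refine ((hx.cross hv).inner ℝ (hasDerivAt_const t b)).congr_deriv ?_
  rw [cross_self_eq_zero, add_zero, inner_zero_right, zero_add, cross_smul_right,
    inner_smul_left, cross_cross_right, inner_sub_left, inner_smul_left, inner_smul_left,
    real_inner_comm b (x t), hbx, real_inner_self_eq_norm_sq, hb, real_inner_comm (v t)]
  simp

end AccelerationAlongCross

theorem auxiliary_dynamics_RS_general
    (kcf : ℝ)
    (b : EuclideanSpace ℝ (Fin 3)) (hb : ‖b‖ = 1)
    (x v a : ℝ → EuclideanSpace ℝ (Fin 3))
    (hx : ∀ t, 0 ≤ t → HasDerivAt x (v t) t)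
    (hv : ∀ t, 0 ≤ t → HasDerivAt v (a t) t)
    (hbx : ∀ t, 0 ≤ t → ⟪b, x t⟫ = 0)
    (hbv : ∀ t, 0 ≤ t → ⟪b, v t⟫ = 0)
    (hacc : ∀ t, 0 ≤ t →
      a t = (kcf / (‖x t‖ ^ 2 * ‖v t‖ ^ 2) * ⟪v t, x t⟫) • cross (v t) b)
    (R S : ℝ → ℝ)
    (hR : ∀ t, R t = ⟪x t, v t⟫)
    (hS : ∀ t, S t = ⟪cross (x t) (v t), b⟫) :
    ∀ t, 0 ≤ t →
      HasDerivAt R (kcf * R t * S t / (R t ^ 2 + S t ^ 2) + ‖v t‖ ^ 2) t ∧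
      HasDerivAt S (-(kcf * R t ^ 2 / (R t ^ 2 + S t ^ 2))) t := by
  intro t ht
  set c := kcf / (‖x t‖ ^ 2 * ‖v t‖ ^ 2) * ⟪v t, x t⟫
  have hc : c = kcf * R t / (R t ^ 2 + S t ^ 2) := by
    rw [hR, hS, inner_sq_add_inner_cross_sq_of_orthogonal hb (hbx t ht) (hbv t ht),
      real_inner_comm]
    ring
  have hva : HasDerivAt v (c • cross (v t) b) t := hacc t ht ▸ hv t ht
  obtain rfl : R = fun s => ⟪x s, v s⟫ := funext hR
  obtain rfl : S = fun s => ⟪cross (x s) (v s), b⟫ := funext hS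
  constructor
  · convert hasDerivAt_inner_of_accel_eq_smul_cross (hx t ht) hva using 1
    rw [hc]
    ring
  · convert hasDerivAt_inner_cross_of_accel_eq_smul_cross hb (hbx t ht) (hx t ht) hva using 1
    rw [hc]
    ring

/-- under the planar circular-field dynamics
`ẍ = (kcf/(‖x‖²‖ẋ‖²))·(ẋ·x)·(ẋ×b)` (with `x ≠ 0`, `ẋ ≠ 0`, `b` a unit vector orthogonal
to `x` and `ẋ`), the auxiliary states `R = x·ẋ` and `S = (x×ẋ)·b` satisfy
`R' = kcf·R·S/(R²+S²) + ‖ẋ‖²` and `S' = −kcf·R²/(R²+S²)` for all `t ≥ 0`. -/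
theorem auxiliary_dynamics_RS
    (kcf : ℝ) (hkcf : 0 < kcf)
    (b : EuclideanSpace ℝ (Fin 3)) (hb : ‖b‖ = 1)
    (x v a : ℝ → EuclideanSpace ℝ (Fin 3))
    (hx : ∀ t, 0 ≤ t → HasDerivAt x (v t) t)
    (hv : ∀ t, 0 ≤ t → HasDerivAt v (a t) t)
    (hxne : ∀ t, 0 ≤ t → x t ≠ 0)
    (hvne : ∀ t, 0 ≤ t → v t ≠ 0)
    (hbx : ∀ t, 0 ≤ t → ⟪b, x t⟫ = 0)
    (hbv : ∀ t, 0 ≤ t → ⟪b, v t⟫ = 0)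
    (hacc : ∀ t, 0 ≤ t →
      a t = (kcf / (‖x t‖ ^ 2 * ‖v t‖ ^ 2) * ⟪v t, x t⟫) • cross (v t) b)
    (R S : ℝ → ℝ)
    (hR : ∀ t, R t = ⟪x t, v t⟫)
    (hS : ∀ t, S t = ⟪cross (x t) (v t), b⟫) :
    ∀ t, 0 ≤ t →
      HasDerivAt R (kcf * R t * S t / (R t ^ 2 + S t ^ 2) + ‖v t‖ ^ 2) t ∧
      HasDerivAt S (-(kcf * R t ^ 2 / (R t ^ 2 + S t ^ 2))) t :=
  auxiliary_dynamics_RS_general kcf b hb x v a hx hv hbx hbv hacc R S hR hS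
end

section
/- If R(0) ≥ 0 and (R(0), S(0)) ≠ (0, 0), then for all t ≥ 0: R(t) ≥ 0 and R(t)² + S(t)² ≥ R(0)² + S(0)²; equivalently, the barrier function V_B(t) = v²/(R(t)² + S(t)²) satisfies V_B(t) ≤ V_B(0) for all t ≥ 0. -/
open Set Filter Topology

/-!
With `N = R² + S²`, the `kcf`-terms cancel in `N' = 2 R R' + 2 S S'`, leaving `N' = 2 v² R`.
So `N` cannot decrease while `R ≥ 0`, and `R` cannot leave `[0, ∞)` while `N > 0`, because at a
zero of `R` we have `R' = v² > 0`. Continuous induction on `[0, t]` propagates both facts.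
-/

lemma eventually_pos_nhdsGT_of_hasDerivAt {f : ℝ → ℝ} {f' x : ℝ} (hf : HasDerivAt f f' x)
    (hx : f x = 0) (hf' : 0 < f') : ∀ᶠ t in 𝓝[>] x, 0 < f t := by
  have hslope : Tendsto (slope f x) (𝓝[>] x) (𝓝 f') :=
    (hasDerivAt_iff_tendsto_slope.mp hf).mono_left (nhdsGT_le_nhdsNE x)
  filter_upwards [hslope.eventually (eventually_gt_nhds hf'), self_mem_nhdsWithin]
    with t hpos hxt
  exact pos_of_slope_pos hxt hpos hx

lemma eventually_nonneg_nhdsGT {f : ℝ → ℝ} {x : ℝ} (hc : ContinuousAt f x) (hx : 0 ≤ f x)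
    (hf : f x = 0 → ∃ f', HasDerivAt f f' x ∧ 0 < f') : ∀ᶠ t in 𝓝[>] x, 0 ≤ f t := by
  rcases hx.lt_or_eq with hpos | hzero
  · exact ((hc.eventually (eventually_gt_nhds hpos)).filter_mono nhdsWithin_le_nhds).mono
      fun _ => le_of_lt
  · obtain ⟨f', hderiv, hf'⟩ := hf hzero.symm
    exact (eventually_pos_nhdsGT_of_hasDerivAt hderiv hzero.symm hf').mono fun _ => le_of_lt

lemma eventually_ge_nhdsGT_of_hasDerivAt_nonneg {g g' : ℝ → ℝ} {x : ℝ} (hc : ContinuousAt g x)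
    (hg : ∀ᶠ t in 𝓝[>] x, HasDerivAt g (g' t) t ∧ 0 ≤ g' t) : ∀ᶠ t in 𝓝[>] x, g x ≤ g t := by
  obtain ⟨u, hxu, hsub⟩ := mem_nhdsGT_iff_exists_Ioo_subset.mp hg
  have hmono : MonotoneOn g (Ico x u) := by
    refine monotoneOn_of_hasDerivWithinAt_nonneg (f' := g') (convex_Ico x u) ?_ ?_ ?_
    · intro t ht
      rcases ht.1.eq_or_lt with rfl | hxt
      · exact hc.continuousWithinAt
      · exact (hsub ⟨hxt, ht.2⟩).1.continuousAt.continuousWithinAt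
    · rw [interior_Ico]
      exact fun t ht => (hsub ht).1.hasDerivWithinAt
    · rw [interior_Ico]
      exact fun t ht => (hsub ht).2
  filter_upwards [Ioo_mem_nhdsGT hxu] with t ht
  exact hmono (left_mem_Ico.mpr hxu) (Ioo_subset_Ico_self ht) ht.1.le

theorem nonneg_and_ge_of_hasDerivAt {f g g' : ℝ → ℝ}
    (hf : ∀ t, 0 ≤ t → ContinuousAt f t) (hg : ∀ t, 0 ≤ t → ContinuousAt g t)
    (hg' : ∀ t, 0 ≤ t → 0 < g t → HasDerivAt g (g' t) t)
    (hg'_nonneg : ∀ t, 0 ≤ f t → 0 ≤ g' t)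
    (hf' : ∀ t, 0 ≤ t → 0 < g t → f t = 0 → ∃ f', HasDerivAt f f' t ∧ 0 < f')
    (hf0 : 0 ≤ f 0) (hg0 : 0 < g 0) {b : ℝ} (hb : 0 ≤ b) : 0 ≤ f b ∧ g 0 ≤ g b := by
  set s : Set ℝ := {t | 0 ≤ f t ∧ g 0 ≤ g t}
  have hclosed : IsClosed (s ∩ Icc 0 b) := by
    have hfc : ContinuousOn f (Icc 0 b) := fun t ht => (hf t ht.1).continuousWithinAt
    have hgc : ContinuousOn g (Icc 0 b) := fun t ht => (hg t ht.1).continuousWithinAt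
    convert (hfc.preimage_isClosed_of_isClosed isClosed_Icc isClosed_Ici).inter
      (hgc.preimage_isClosed_of_isClosed isClosed_Icc isClosed_Ici) using 1
    ext t
    simp only [s, mem_inter_iff, mem_ofPred_eq, mem_preimage, mem_Ici]
    tauto
  have hstep : ∀ x ∈ s ∩ Ico 0 b, s ∈ 𝓝[>] x := by
    rintro x ⟨⟨hfx, hgx⟩, hx0, -⟩
    have hgx_pos : 0 < g x := hg0.trans_le hgx
    have hg_pos : ∀ᶠ t in 𝓝[>] x, 0 < g t :=
      ((hg x hx0).eventually (eventually_gt_nhds hgx_pos)).filter_mono nhdsWithin_le_nhds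
    have hf_nonneg : ∀ᶠ t in 𝓝[>] x, 0 ≤ f t :=
      eventually_nonneg_nhdsGT (hf x hx0) hfx (hf' x hx0 hgx_pos)
    have hg_ge : ∀ᶠ t in 𝓝[>] x, g x ≤ g t := by
      refine eventually_ge_nhdsGT_of_hasDerivAt_nonneg (g' := g') (hg x hx0) ?_
      filter_upwards [hg_pos, hf_nonneg, self_mem_nhdsWithin] with t hgt hft hxt
      exact ⟨hg' t (hx0.trans hxt.out.le) hgt, hg'_nonneg t hft⟩
    filter_upwards [hf_nonneg, hg_ge] with t hft hgt
    exact ⟨hft, hgx.trans hgt⟩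
  exact hclosed.Icc_subset_of_forall_mem_nhdsWithin ⟨hf0, le_rfl⟩ hstep ⟨hb, le_rfl⟩

lemma prod_ne_zero_iff_sq_add_sq_pos {a b : ℝ} : (a, b) ≠ (0, 0) ↔ 0 < a ^ 2 + b ^ 2 := by
  rw [Ne, Prod.mk.injEq, ← not_le, not_iff_not]
  constructor
  · rintro ⟨rfl, rfl⟩
    norm_num
  · intro h
    constructor <;> nlinarith [sq_nonneg a, sq_nonneg b]

lemma hasDerivAt_sq_add_sq_of_circularField {R S : ℝ → ℝ} {k w t : ℝ}
    (hR : HasDerivAt R (k * R t * S t / (R t ^ 2 + S t ^ 2) + w) t)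
    (hS : HasDerivAt S (-(k * R t ^ 2 / (R t ^ 2 + S t ^ 2))) t) :
    HasDerivAt (fun s => R s ^ 2 + S s ^ 2) (2 * w * R t) t := by
  refine ((hR.fun_pow 2).add (hS.fun_pow 2)).congr_deriv ?_
  push_cast
  ring

theorem cf_point_obstacle_R_nonneg_general
    (kcf v : ℝ) (hv : 0 < v)
    (R S : ℝ → ℝ)
    (hRdiff : ∀ t, 0 ≤ t → DifferentiableAt ℝ R t)
    (hSdiff : ∀ t, 0 ≤ t → DifferentiableAt ℝ S t)
    (hR : ∀ t, 0 ≤ t → (R t, S t) ≠ (0, 0) →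
      HasDerivAt R (kcf * R t * S t / (R t ^ 2 + S t ^ 2) + v ^ 2) t)
    (hS : ∀ t, 0 ≤ t → (R t, S t) ≠ (0, 0) →
      HasDerivAt S (-(kcf * R t ^ 2 / (R t ^ 2 + S t ^ 2))) t)
    (hR0 : 0 ≤ R 0) (h0 : (R 0, S 0) ≠ (0, 0)) :
    ∀ t, 0 ≤ t → 0 ≤ R t ∧ R 0 ^ 2 + S 0 ^ 2 ≤ R t ^ 2 + S t ^ 2 ∧
      v ^ 2 / (R t ^ 2 + S t ^ 2) ≤ v ^ 2 / (R 0 ^ 2 + S 0 ^ 2) := by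
  intro t ht
  have hpair : ∀ s, 0 < R s ^ 2 + S s ^ 2 → (R s, S s) ≠ (0, 0) :=
    fun s => prod_ne_zero_iff_sq_add_sq_pos.mpr
  have hN0 : 0 < R 0 ^ 2 + S 0 ^ 2 := prod_ne_zero_iff_sq_add_sq_pos.mp h0
  obtain ⟨hRt, hNt⟩ := nonneg_and_ge_of_hasDerivAt (g := fun s => R s ^ 2 + S s ^ 2)
    (g' := fun s => 2 * v ^ 2 * R s)
    (fun s hs => (hRdiff s hs).continuousAt)
    (fun s hs => ((hRdiff s hs).continuousAt.pow 2).add ((hSdiff s hs).continuousAt.pow 2))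
    (fun s hs hNs => hasDerivAt_sq_add_sq_of_circularField (hR s hs (hpair s hNs))
      (hS s hs (hpair s hNs)))
    (fun s hRs => mul_nonneg (by positivity) hRs)
    (fun s hs hNs hRs => ⟨_, hR s hs (hpair s hNs), by
      simp only [hRs, mul_zero, zero_mul, zero_div, zero_add]; positivity⟩)
    hR0 hN0 ht
  exact ⟨hRt, hNt, div_le_div_of_nonneg_left (by positivity) hN0 hNt⟩

/-- Lemma 2 of the paper: if `R(0) ≥ 0` and `(R(0),S(0)) ≠ (0,0)`,
then `R(t) ≥ 0` and `R(t)² + S(t)² ≥ R(0)² + S(0)²` for all `t ≥ 0`; equivalently the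
barrier `V_B(t) = v²/(R(t)²+S(t)²)` satisfies `V_B(t) ≤ V_B(0)`. -/
theorem cf_point_obstacle_R_nonneg
    (kcf v : ℝ) (hkcf : 0 < kcf) (hv : 0 < v)
    (R S : ℝ → ℝ)
    (hRdiff : ∀ t, 0 ≤ t → DifferentiableAt ℝ R t)
    (hSdiff : ∀ t, 0 ≤ t → DifferentiableAt ℝ S t)
    (hR : ∀ t, 0 ≤ t → (R t, S t) ≠ (0, 0) →
      HasDerivAt R (kcf * R t * S t / (R t ^ 2 + S t ^ 2) + v ^ 2) t)
    (hS : ∀ t, 0 ≤ t → (R t, S t) ≠ (0, 0) →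
      HasDerivAt S (-(kcf * R t ^ 2 / (R t ^ 2 + S t ^ 2))) t)
    (hR0 : 0 ≤ R 0) (h0 : (R 0, S 0) ≠ (0, 0)) :
    ∀ t, 0 ≤ t → 0 ≤ R t ∧ R 0 ^ 2 + S 0 ^ 2 ≤ R t ^ 2 + S t ^ 2 ∧
      v ^ 2 / (R t ^ 2 + S t ^ 2) ≤ v ^ 2 / (R 0 ^ 2 + S 0 ^ 2) :=
  cf_point_obstacle_R_nonneg_general kcf v hv R S hRdiff hSdiff hR hS hR0 h0
end

section
/- If S(0) < 0, then for all t ≥ 0: S(t) ≤ S(0) (hence S(t)² ≥ S(0)² > 0) and R(t)² + S(t)² ≥ S(0)²; equivalently, the barrier function V_B(t) = v²/(R(t)² + S(t)²) satisfies V_B(t) ≤ v²/S(0)² < ∞ for all t ≥ 0. -/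
/-!
While `S < 0` the state `(R, S)` stays off the collision point, so the dynamics apply and
`S' = -kcf R² / (R² + S²) ≤ 0`. Hence `S`, being continuous, can never climb back above `S(0) < 0`:
on any stretch where it stays negative it is antitone. The other bounds follow from
`S(t) ≤ S(0) < 0`.
-/

open Set Filter Topology

theorem le_left_of_hasDerivAt_nonpos_below {f f' : ℝ → ℝ} {a b c : ℝ}
    (hf : ContinuousOn f (Icc a b)) (ha : f a < c)
    (hf' : ∀ x ∈ Ioo a b, f x < c → HasDerivAt f (f' x) x)
    (hf'₀ : ∀ x ∈ Ioo a b, f x < c → f' x ≤ 0) :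
    ∀ x ∈ Icc a b, f x ≤ f a := by
  suffices Icc a b ⊆ {x | f x ≤ f a} from this
  refine IsClosed.Icc_subset_of_forall_exists_gt ?_ (le_refl (f a)) ?_
  · rw [inter_comm]
    exact hf.preimage_isClosed_of_isClosed isClosed_Icc isClosed_Iic
  rintro x ⟨hfx, hx⟩ y hxy
  have hbelow : ∀ᶠ w in 𝓝[≥] x, w ∈ Ico x b ∧ f w < c :=
    Eventually.and (Ico_mem_nhdsGE hx.2) <|
      ((hf x (Ico_subset_Icc_self hx)).mono_of_mem_nhdsWithin
        (Icc_mem_nhdsGE_of_mem hx)).eventually (gt_mem_nhds (hfx.trans_lt ha))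
  obtain ⟨u, hxu : x < u, hu⟩ := mem_nhdsGE_iff_exists_Ico_subset.1 hbelow
  set z := min y ((x + u) / 2)
  have hxz : x < z := lt_min hxy (by linarith)
  have hzu : Icc x z ⊆ Ico x u := fun w hw =>
    ⟨hw.1, hw.2.trans_lt ((min_le_right _ _).trans_lt (by linarith))⟩
  have hgood : ∀ w ∈ Icc x z, w ∈ Ico x b ∧ f w < c := fun w hw => hu (hzu hw)
  have hIoo : ∀ w ∈ Ioo x z, w ∈ Ioo a b := fun w hw =>
    ⟨hx.1.trans_lt hw.1, (hgood w (Ioo_subset_Icc_self hw)).1.2⟩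
  have hanti : AntitoneOn f (Icc x z) := by
    refine antitoneOn_of_hasDerivWithinAt_nonpos (f' := f') (convex_Icc x z)
      (hf.mono fun w hw => ⟨hx.1.trans hw.1, (hgood w hw).1.2.le⟩) ?_ ?_ <;>
      rw [interior_Icc] <;> intro w hw
    · exact (hf' w (hIoo w hw) (hgood w (Ioo_subset_Icc_self hw)).2).hasDerivWithinAt
    · exact hf'₀ w (hIoo w hw) (hgood w (Ioo_subset_Icc_self hw)).2
  exact ⟨z, (hanti (left_mem_Icc.2 hxz.le) (right_mem_Icc.2 hxz.le) hxz.le).trans hfx,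
    hxz, min_le_left _ _⟩

theorem cf_point_obstacle_S_neg_general
    (kcf v : ℝ) (hkcf : 0 < kcf)
    (R S : ℝ → ℝ)
    (hSdiff : ∀ t, 0 ≤ t → DifferentiableAt ℝ S t)
    (hS : ∀ t, 0 ≤ t → (R t, S t) ≠ (0, 0) →
      HasDerivAt S (-(kcf * R t ^ 2 / (R t ^ 2 + S t ^ 2))) t)
    (hS0 : S 0 < 0) :
    ∀ t, 0 ≤ t → S t ≤ S 0 ∧ S 0 ^ 2 ≤ S t ^ 2 ∧ S 0 ^ 2 ≤ R t ^ 2 + S t ^ 2 ∧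
      v ^ 2 / (R t ^ 2 + S t ^ 2) ≤ v ^ 2 / S 0 ^ 2 := by
  intro t ht
  have hSt : S t ≤ S 0 := by
    refine le_left_of_hasDerivAt_nonpos_below (c := 0)
      (fun s hs => (hSdiff s hs.1).continuousAt.continuousWithinAt) hS0
      (fun s hs hSs => hS s hs.1.le fun h => hSs.ne (Prod.ext_iff.1 h).2) (fun s _ _ => ?_)
      t ⟨ht, le_rfl⟩
    exact neg_nonpos.2 (by positivity)
  have hsq : S 0 ^ 2 ≤ S t ^ 2 := by nlinarith
  have hnorm : S 0 ^ 2 ≤ R t ^ 2 + S t ^ 2 := by nlinarith [sq_nonneg (R t)]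
  exact ⟨hSt, hsq, hnorm, div_le_div_of_nonneg_left (sq_nonneg v) (sq_pos_of_neg hS0) hnorm⟩

/-- Lemma 3 of the paper: if `S(0) < 0`, then `S(t) ≤ S(0)`
(hence `S(t)² ≥ S(0)² > 0`) and `R(t)² + S(t)² ≥ S(0)²` for all `t ≥ 0`; equivalently
the barrier `V_B(t) = v²/(R(t)²+S(t)²)` satisfies `V_B(t) ≤ v²/S(0)² < ∞`. -/
theorem cf_point_obstacle_S_neg
    (kcf v : ℝ) (hkcf : 0 < kcf) (hv : 0 < v)
    (R S : ℝ → ℝ)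
    (hRdiff : ∀ t, 0 ≤ t → DifferentiableAt ℝ R t)
    (hSdiff : ∀ t, 0 ≤ t → DifferentiableAt ℝ S t)
    (hR : ∀ t, 0 ≤ t → (R t, S t) ≠ (0, 0) →
      HasDerivAt R (kcf * R t * S t / (R t ^ 2 + S t ^ 2) + v ^ 2) t)
    (hS : ∀ t, 0 ≤ t → (R t, S t) ≠ (0, 0) →
      HasDerivAt S (-(kcf * R t ^ 2 / (R t ^ 2 + S t ^ 2))) t)
    (hS0 : S 0 < 0) :
    ∀ t, 0 ≤ t → S t ≤ S 0 ∧ S 0 ^ 2 ≤ S t ^ 2 ∧ S 0 ^ 2 ≤ R t ^ 2 + S t ^ 2 ∧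
      v ^ 2 / (R t ^ 2 + S t ^ 2) ≤ v ^ 2 / S 0 ^ 2 :=
  cf_point_obstacle_S_neg_general kcf v hkcf R S hSdiff hS hS0
end

section
/- At every t ≥ 0 with (R(t), S(t)) ≠ (0, 0), the distance ε(t) = S(t) + c·R(t) to the collision ray satisfies ε'(t) = kcf·S(t)·ε(t)/(R(t)² + S(t)²). In particular, if ε(t₀) = 0 and (R(t), S(t)) ≠ (0,0) on [t₀, t₁], then ε(t) = 0 for all t ∈ [t₀, t₁] (the collision ray is positively invariant). -/
/-!
Along the dynamics `ε' = -kcf R²/(R² + S²) + c·kcf R S/(R² + S²) + c v²`, and since `c v² = kcf`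
the last term turns `-R²` into `S²`, which leaves `ε' = kcf S ε/(R² + S²)`.
So `ε` solves a scalar linear equation `ε' = g ε` whose coefficient `g = kcf S/(R² + S²)` is
continuous, hence bounded, on any compact interval free of collisions; by Grönwall's inequality a
solution of such an equation vanishing at the left endpoint vanishes on the whole interval.
-/

open Set

theorem sq_add_sq_pos_of_ne_zero {x y : ℝ} (h : (x, y) ≠ (0, 0)) : 0 < x ^ 2 + y ^ 2 := by
  rcases not_and_or.mp (mt Prod.ext_iff.mpr h) with hx | hy
  · exact add_pos_of_pos_of_nonneg (sq_pos_of_ne_zero hx) (sq_nonneg y)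
  · exact add_pos_of_nonneg_of_pos (sq_nonneg x) (sq_pos_of_ne_zero hy)

theorem eq_zero_of_hasDerivWithinAt_smul_self {E : Type*} [NormedAddCommGroup E]
    [NormedSpace ℝ E] {f : ℝ → E} {g : ℝ → ℝ} {a b : ℝ}
    (hg : ContinuousOn g (Icc a b)) (hf : ContinuousOn f (Icc a b))
    (hf' : ∀ x ∈ Ico a b, HasDerivWithinAt f (g x • f x) (Ici x) x) (ha : f a = 0) :
    ∀ x ∈ Icc a b, f x = 0 := by
  obtain ⟨K, hK⟩ := isCompact_Icc.exists_bound_of_continuousOn hg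
  refine eq_zero_of_abs_deriv_le_mul_abs_self_of_eq_zero_right (K := K) hf hf' ha fun x hx => ?_
  rw [norm_smul]
  exact mul_le_mul_of_nonneg_right (hK x (Ico_subset_Icc_self hx)) (norm_nonneg _)

theorem hasDerivAt_collisionRay_distance {kcf v t : ℝ} {R S : ℝ → ℝ} (hv : v ≠ 0)
    (hD : R t ^ 2 + S t ^ 2 ≠ 0)
    (hR : HasDerivAt R (kcf * R t * S t / (R t ^ 2 + S t ^ 2) + v ^ 2) t)
    (hS : HasDerivAt S (-(kcf * R t ^ 2 / (R t ^ 2 + S t ^ 2))) t) :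
    HasDerivAt (fun s => S s + kcf / v ^ 2 * R s)
      (kcf * S t * (S t + kcf / v ^ 2 * R t) / (R t ^ 2 + S t ^ 2)) t := by
  refine (hS.add (hR.const_mul (kcf / v ^ 2))).congr_deriv ?_
  field_simp
  ring

theorem cf_collision_ray_dynamics_and_invariance_general
    (kcf v c : ℝ) (hv : 0 < v) (hc : c = kcf / v ^ 2)
    (R S : ℝ → ℝ)
    (hR : ∀ t, 0 ≤ t → (R t, S t) ≠ (0, 0) →
      HasDerivAt R (kcf * R t * S t / (R t ^ 2 + S t ^ 2) + v ^ 2) t)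
    (hS : ∀ t, 0 ≤ t → (R t, S t) ≠ (0, 0) →
      HasDerivAt S (-(kcf * R t ^ 2 / (R t ^ 2 + S t ^ 2))) t) :
    (∀ t, 0 ≤ t → (R t, S t) ≠ (0, 0) →
      HasDerivAt (fun s => S s + c * R s)
        (kcf * S t * (S t + c * R t) / (R t ^ 2 + S t ^ 2)) t) ∧
    (∀ t₀ t₁ : ℝ, 0 ≤ t₀ → t₀ ≤ t₁ → S t₀ + c * R t₀ = 0 →
      (∀ t ∈ Set.Icc t₀ t₁, (R t, S t) ≠ (0, 0)) →
      ∀ t ∈ Set.Icc t₀ t₁, S t + c * R t = 0) := by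
  subst hc
  have hε : ∀ t, 0 ≤ t → (R t, S t) ≠ (0, 0) → HasDerivAt (fun s => S s + kcf / v ^ 2 * R s)
      (kcf * S t * (S t + kcf / v ^ 2 * R t) / (R t ^ 2 + S t ^ 2)) t := fun t ht hne =>
    hasDerivAt_collisionRay_distance hv.ne' (sq_add_sq_pos_of_ne_zero hne).ne'
      (hR t ht hne) (hS t ht hne)
  refine ⟨hε, fun t₀ t₁ ht₀ _ hε₀ hno => ?_⟩
  have hnonneg : ∀ t ∈ Icc t₀ t₁, 0 ≤ t := fun t ht => ht₀.trans ht.1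
  have hcoeff : ContinuousOn (fun t => kcf * S t / (R t ^ 2 + S t ^ 2)) (Icc t₀ t₁) := by
    intro t ht
    have hRt := (hR t (hnonneg t ht) (hno t ht)).continuousAt
    have hSt := (hS t (hnonneg t ht) (hno t ht)).continuousAt
    exact ((continuousAt_const.mul hSt).div ((hRt.pow 2).add (hSt.pow 2))
      (sq_add_sq_pos_of_ne_zero (hno t ht)).ne').continuousWithinAt
  refine eq_zero_of_hasDerivWithinAt_smul_self hcoeff
    (fun t ht => (hε t (hnonneg t ht) (hno t ht)).continuousAt.continuousWithinAt)
    (fun t ht => ?_) hε₀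
  have hεt := hε t (hnonneg t (Ico_subset_Icc_self ht)) (hno t (Ico_subset_Icc_self ht))
  convert hεt.hasDerivWithinAt using 1
  rw [smul_eq_mul]
  ring

/-- the distance `ε = S + c·R` to the collision ray (with `c = kcf/v²`)
satisfies `ε' = kcf·S·ε/(R²+S²)` along the auxiliary dynamics; in particular the collision
ray `ε = 0` is positively invariant as long as no collision `(R,S) = (0,0)` occurs. -/
theorem cf_collision_ray_dynamics_and_invariance
    (kcf v c : ℝ) (hkcf : 0 < kcf) (hv : 0 < v) (hc : c = kcf / v ^ 2)
    (R S : ℝ → ℝ)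
    (hRdiff : ∀ t, 0 ≤ t → DifferentiableAt ℝ R t)
    (hSdiff : ∀ t, 0 ≤ t → DifferentiableAt ℝ S t)
    (hR : ∀ t, 0 ≤ t → (R t, S t) ≠ (0, 0) →
      HasDerivAt R (kcf * R t * S t / (R t ^ 2 + S t ^ 2) + v ^ 2) t)
    (hS : ∀ t, 0 ≤ t → (R t, S t) ≠ (0, 0) →
      HasDerivAt S (-(kcf * R t ^ 2 / (R t ^ 2 + S t ^ 2))) t) :
    (∀ t, 0 ≤ t → (R t, S t) ≠ (0, 0) →
      HasDerivAt (fun s => S s + c * R s)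
        (kcf * S t * (S t + c * R t) / (R t ^ 2 + S t ^ 2)) t) ∧
    (∀ t₀ t₁ : ℝ, 0 ≤ t₀ → t₀ ≤ t₁ → S t₀ + c * R t₀ = 0 →
      (∀ t ∈ Set.Icc t₀ t₁, (R t, S t) ≠ (0, 0)) →
      ∀ t ∈ Set.Icc t₀ t₁, S t + c * R t = 0) :=
  cf_collision_ray_dynamics_and_invariance_general kcf v c hv hc R S hR hS
end

section
/- Let τ > 0 and suppose S(t) ≥ 0 and (R(t), S(t)) ≠ (0, 0) for all t ∈ [0, τ]. Then t ↦ |ε(t)| is nondecreasing on [0, τ]; in particular |ε(t)| ≥ |ε(0)| for all t ∈ [0, τ]. -/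
/-!
Along the flow, `ε = S + c R` satisfies the linear equation `ε' = (kcf S / (R² + S²)) ε`:
with `c v² = kcf` the `v²`-term of `c R'` cancels the `-kcf R²/(R² + S²)` of `S'`.
While `S ≥ 0` the coefficient is nonnegative, so `(ε²)' = 2 (kcf S / (R² + S²)) ε² ≥ 0`
and `|ε|` cannot decrease.
-/

lemma sq_add_sq_ne_zero {α : Type*} [Ring α] [LinearOrder α] [IsStrictOrderedRing α]
    {a b : α} (h : (a, b) ≠ (0, 0)) : a ^ 2 + b ^ 2 ≠ 0 := by
  rw [sq, sq, Ne, mul_self_add_mul_self_eq_zero]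
  rintro ⟨rfl, rfl⟩
  exact h rfl

lemma monotoneOn_abs_of_hasDerivAt_mul_self {s : Set ℝ} (hs : Convex ℝ s) {f g : ℝ → ℝ}
    (hf : ∀ t ∈ s, HasDerivAt f (g t * f t) t) (hg : ∀ t ∈ s, 0 ≤ g t) :
    MonotoneOn (fun t => |f t|) s := by
  have hsq : MonotoneOn (fun t => f t ^ 2) s := by
    refine monotoneOn_of_hasDerivWithinAt_nonneg (f' := fun t => 2 * g t * f t ^ 2) hs
      (fun t ht => ((hf t ht).fun_pow 2).continuousAt.continuousWithinAt) (fun t ht => ?_)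
      (fun t ht => by have := hg t (interior_subset ht); positivity)
    exact (((hf t (interior_subset ht)).fun_pow 2).congr_deriv (by ring)).hasDerivWithinAt
  exact fun a ha b hb hab => sq_le_sq.mp (hsq ha hb hab)

lemma hasDerivAt_circularField_eps {kcf v c : ℝ} (hv : v ≠ 0) (hc : c = kcf / v ^ 2)
    {R S : ℝ → ℝ} {t : ℝ} (hD : R t ^ 2 + S t ^ 2 ≠ 0)
    (hR : HasDerivAt R (kcf * R t * S t / (R t ^ 2 + S t ^ 2) + v ^ 2) t)
    (hS : HasDerivAt S (-(kcf * R t ^ 2 / (R t ^ 2 + S t ^ 2))) t) :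
    HasDerivAt (fun t => S t + c * R t)
      (kcf * S t / (R t ^ 2 + S t ^ 2) * (S t + c * R t)) t := by
  refine (hS.add (hR.const_mul c)).congr_deriv ?_
  subst hc
  field_simp
  ring

theorem cf_eps_abs_nondecreasing_general
    (kcf v c : ℝ) (hkcf : 0 < kcf) (hv : 0 < v) (hc : c = kcf / v ^ 2)
    (R S : ℝ → ℝ)
    (hR : ∀ t, 0 ≤ t → (R t, S t) ≠ (0, 0) →
      HasDerivAt R (kcf * R t * S t / (R t ^ 2 + S t ^ 2) + v ^ 2) t)
    (hS : ∀ t, 0 ≤ t → (R t, S t) ≠ (0, 0) →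
      HasDerivAt S (-(kcf * R t ^ 2 / (R t ^ 2 + S t ^ 2))) t)
    (τ : ℝ)
    (hSnonneg : ∀ t ∈ Set.Icc (0 : ℝ) τ, 0 ≤ S t)
    (hnocoll : ∀ t ∈ Set.Icc (0 : ℝ) τ, (R t, S t) ≠ (0, 0)) :
    MonotoneOn (fun t => |S t + c * R t|) (Set.Icc (0 : ℝ) τ) ∧
    ∀ t ∈ Set.Icc (0 : ℝ) τ, |S 0 + c * R 0| ≤ |S t + c * R t| := by
  have hmono : MonotoneOn (fun t => |S t + c * R t|) (Set.Icc (0 : ℝ) τ) := by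
    refine monotoneOn_abs_of_hasDerivAt_mul_self (convex_Icc 0 τ)
      (g := fun t => kcf * S t / (R t ^ 2 + S t ^ 2)) (fun t ht => ?_)
      (fun t ht => by have := hSnonneg t ht; positivity)
    exact hasDerivAt_circularField_eps hv.ne' hc (sq_add_sq_ne_zero (hnocoll t ht))
      (hR t ht.1 (hnocoll t ht)) (hS t ht.1 (hnocoll t ht))
  exact ⟨hmono, fun t ht => hmono ⟨le_rfl, ht.1.trans ht.2⟩ ht ht.1⟩

/-- if `S(t) ≥ 0` and no collision occurs on `[0, τ]`, then the distance
`|ε| = |S + c·R|` to the collision ray (with `c = kcf/v²`) is nondecreasing on `[0, τ]`;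
in particular `|ε(t)| ≥ |ε(0)|` on `[0, τ]`. -/
theorem cf_eps_abs_nondecreasing
    (kcf v c : ℝ) (hkcf : 0 < kcf) (hv : 0 < v) (hc : c = kcf / v ^ 2)
    (R S : ℝ → ℝ)
    (hRdiff : ∀ t, 0 ≤ t → DifferentiableAt ℝ R t)
    (hSdiff : ∀ t, 0 ≤ t → DifferentiableAt ℝ S t)
    (hR : ∀ t, 0 ≤ t → (R t, S t) ≠ (0, 0) →
      HasDerivAt R (kcf * R t * S t / (R t ^ 2 + S t ^ 2) + v ^ 2) t)
    (hS : ∀ t, 0 ≤ t → (R t, S t) ≠ (0, 0) →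
      HasDerivAt S (-(kcf * R t ^ 2 / (R t ^ 2 + S t ^ 2))) t)
    (τ : ℝ) (hτ : 0 < τ)
    (hSnonneg : ∀ t ∈ Set.Icc (0 : ℝ) τ, 0 ≤ S t)
    (hnocoll : ∀ t ∈ Set.Icc (0 : ℝ) τ, (R t, S t) ≠ (0, 0)) :
    MonotoneOn (fun t => |S t + c * R t|) (Set.Icc (0 : ℝ) τ) ∧
    ∀ t ∈ Set.Icc (0 : ℝ) τ, |S 0 + c * R 0| ≤ |S t + c * R t| :=
  cf_eps_abs_nondecreasing_general kcf v c hkcf hv hc R S hR hS τ hSnonneg hnocoll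
end

section
/- Suppose R(0) < 0, S(0) > 0 and ε(0) ≠ 0. Then there exists a time τ > 0 such that R(τ) = 0 or S(τ) = 0, and for all t ∈ [0, τ]: |ε(t)| ≥ |ε(0)| and R(t)² + S(t)² ≥ ε(0)²/max(c, 1)². In particular (R(t), S(t)) ≠ (0, 0) on [0, τ], i.e., no collision occurs; in terms of the robot this gives ‖x(t)‖ = √(R(t)²+S(t)²)/v ≥ |ε(0)|/(max(c,1)·v). -/
/-!
In the open quadrant `R < 0 < S`, with `N = R² + S²` and `ε = S + c R`, the dynamics give
`N' = 2 v² R ≤ 0`, `(ε²)' = 2 kcf S ε² / N ≥ 0` and, for the polar angle,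
`(arctan (S / R))' = -v² ε / N`. So `|ε|` never decreases, `N` never increases, and the angle
moves monotonically at a rate at least `v² ε(0)² / N(0)`; since it is bounded, the trajectory
leaves the quadrant in finite time. Up to the first exit time `τ` one has `R S ≤ 0`, hence
`ε² ≤ max(c,1)² N`, which together with `ε(t)² ≥ ε(0)²` bounds `N` away from zero.
-/

open Set Real

def CircularFieldDynamicsAt (kcf v : ℝ) (R S : ℝ → ℝ) (t : ℝ) : Prop :=
  HasDerivAt R (kcf * R t * S t / (R t ^ 2 + S t ^ 2) + v ^ 2) t ∧
    HasDerivAt S (-(kcf * R t ^ 2 / (R t ^ 2 + S t ^ 2))) t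

theorem pos_of_continuousOn_Icc_of_ne_zero {f : ℝ → ℝ} {a b : ℝ} (hab : a ≤ b)
    (hf : ContinuousOn f (Icc a b)) (ha : 0 < f a) (hne : ∀ x ∈ Icc a b, f x ≠ 0) :
    0 < f b := by
  by_contra! hb
  obtain ⟨x, hx, hfx⟩ := intermediate_value_Icc' hab hf ⟨hb, ha.le⟩
  exact hne x hx hfx

theorem not_bddAbove_image_Ici_of_le_deriv {f f' : ℝ → ℝ} {δ : ℝ} (hδ : 0 < δ)
    (hf : ContinuousOn f (Ici 0)) (hf' : ∀ t, 0 < t → HasDerivAt f (f' t) t)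
    (hδf' : ∀ t, 0 < t → δ ≤ f' t) : ¬ BddAbove (f '' Ici 0) := by
  rintro ⟨M, hM⟩
  have hlin : ∀ t, 0 ≤ t → δ * (t - 0) ≤ f t - f 0 := by
    refine fun t ht => (convex_Ici 0).mul_sub_le_image_sub_of_le_deriv hf
      (fun x hx => ?_) (fun x hx => ?_) 0 self_mem_Ici t ht ht <;> rw [interior_Ici] at hx
    · exact (hf' x hx).differentiableAt.differentiableWithinAt
    · exact (hf' x hx).deriv ▸ hδf' x hx
  set t := (|M - f 0| + 1) / δ
  have ht : 0 ≤ t := by positivity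
  have hδt : δ * t = |M - f 0| + 1 := mul_div_cancel₀ _ hδ.ne'
  linarith [hlin t ht, hM ⟨t, ht, rfl⟩, le_abs_self (M - f 0)]

theorem sq_le_mul_of_forall_sq_le {g : ℝ → ℝ} (hg : ContinuousOn g (Ici 0)) (h0 : g 0 ≠ 0)
    (hsq : ∀ t, 0 ≤ t → g 0 ^ 2 ≤ g t ^ 2) {t : ℝ} (ht : 0 ≤ t) : g 0 ^ 2 ≤ g 0 * g t := by
  have hsign : 0 < g 0 * g t :=
    pos_of_continuousOn_Icc_of_ne_zero (f := fun s => g 0 * g s) ht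
      (continuousOn_const.mul (hg.mono Icc_subset_Ici_self)) (mul_self_pos.2 h0)
      fun s hs => mul_ne_zero h0 fun hgs => by simpa [hgs, h0] using hsq s hs.1
  nlinarith [hsq t ht, sq_nonneg (g 0)]

theorem exists_first_exit_quadrant {R S : ℝ → ℝ} (hR : ContinuousOn R (Ici 0))
    (hS : ContinuousOn S (Ici 0)) (hR0 : R 0 < 0) (hS0 : 0 < S 0)
    (hexit : ¬ ∀ t, 0 ≤ t → R t < 0 ∧ 0 < S t) :
    ∃ τ, 0 < τ ∧ R τ * S τ = 0 ∧ ∀ t ∈ Ico 0 τ, R t < 0 ∧ 0 < S t := by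
  set A := Ici 0 ∩ (fun t => R t * S t) ⁻¹' {0}
  have hAbdd : BddBelow A := ⟨0, fun _ h => h.1⟩
  have hquad (t : ℝ) (ht : 0 ≤ t) (hA : ∀ s ∈ Icc 0 t, s ∉ A) : R t < 0 ∧ 0 < S t := by
    have hRS (s : ℝ) (hs : s ∈ Icc 0 t) : R s ≠ 0 ∧ S s ≠ 0 :=
      mul_ne_zero_iff.1 fun h => hA s hs ⟨hs.1, h⟩
    have hRt : 0 < -R t := pos_of_continuousOn_Icc_of_ne_zero (f := fun s => -R s) ht
      (hR.mono Icc_subset_Ici_self).neg (neg_pos.2 hR0) fun s hs => neg_ne_zero.2 (hRS s hs).1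
    exact ⟨neg_pos.1 hRt, pos_of_continuousOn_Icc_of_ne_zero ht (hS.mono Icc_subset_Ici_self) hS0
      fun s hs => (hRS s hs).2⟩
  have hAne : A.Nonempty := by
    by_contra hA
    exact hexit fun t ht => hquad t ht fun s _ hs => hA ⟨s, hs⟩
  have hτA : sInf A ∈ A := (hR.mul hS).preimage_isClosed_of_isClosed isClosed_Ici
    isClosed_singleton |>.csInf_mem hAne hAbdd
  refine ⟨sInf A, hτA.1.lt_of_ne fun h => (mul_neg_of_neg_of_pos hR0 hS0).ne (h ▸ hτA.2), hτA.2,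
    fun t ht => hquad t ht.1 fun s hs hsA => (csInf_le hAbdd hsA).not_gt (hs.2.trans_lt ht.2)⟩

namespace CircularFieldDynamicsAt

variable {kcf v c : ℝ} {R S : ℝ → ℝ} {t : ℝ}

theorem hasDerivAt_normSq (h : CircularFieldDynamicsAt kcf v R S t) :
    HasDerivAt (fun s => R s ^ 2 + S s ^ 2) (2 * v ^ 2 * R t) t :=
  ((h.1.pow 2).add (h.2.pow 2)).congr_deriv (by ring)

theorem hasDerivAt_eps (h : CircularFieldDynamicsAt kcf v R S t) (hv : v ≠ 0)
    (hc : c = kcf / v ^ 2) (hN : R t ^ 2 + S t ^ 2 ≠ 0) :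
    HasDerivAt (fun s => S s + c * R s)
      (kcf * S t * (S t + c * R t) / (R t ^ 2 + S t ^ 2)) t :=
  (h.2.add (h.1.const_mul c)).congr_deriv (by subst hc; field_simp; ring)

theorem hasDerivAt_arctan_div (h : CircularFieldDynamicsAt kcf v R S t) (hv : v ≠ 0)
    (hc : c = kcf / v ^ 2) (hR : R t ≠ 0) :
    HasDerivAt (fun s => arctan (S s / R s))
      (-(v ^ 2 * (S t + c * R t)) / (R t ^ 2 + S t ^ 2)) t := by
  have hN : R t ^ 2 + S t ^ 2 ≠ 0 := by positivity
  exact (h.2.div h.1 hR).arctan.congr_deriv (by subst hc; simp only [Pi.div_apply]; field_simp; ring)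

end CircularFieldDynamicsAt

section

variable {kcf v c : ℝ} {R S : ℝ → ℝ}

theorem monotoneOn_sq_eps (hkcf : 0 ≤ kcf) (hv : v ≠ 0) (hc : c = kcf / v ^ 2) {a b : ℝ}
    (hR : ContinuousOn R (Icc a b)) (hS : ContinuousOn S (Icc a b))
    (hdyn : ∀ t ∈ Ioo a b, CircularFieldDynamicsAt kcf v R S t)
    (hSpos : ∀ t ∈ Ioo a b, 0 < S t) :
    MonotoneOn (fun t => (S t + c * R t) ^ 2) (Icc a b) := by
  refine monotoneOn_of_hasDerivWithinAt_nonneg (convex_Icc a b)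
    ((hS.add (continuousOn_const.mul hR)).pow 2) (fun t ht => ?_) (fun t ht => ?_)
    (f' := fun t => 2 * kcf * S t * (S t + c * R t) ^ 2 / (R t ^ 2 + S t ^ 2)) <;>
    rw [interior_Icc] at ht <;> have hSt := hSpos t ht
  · have hN : R t ^ 2 + S t ^ 2 ≠ 0 := by positivity
    exact (((hdyn t ht).hasDerivAt_eps hv hc hN).pow 2).hasDerivWithinAt.congr_deriv
      (by field_simp; ring)
  · positivity

theorem antitoneOn_normSq {a b : ℝ} (hR : ContinuousOn R (Icc a b))
    (hS : ContinuousOn S (Icc a b)) (hdyn : ∀ t ∈ Ioo a b, CircularFieldDynamicsAt kcf v R S t)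
    (hRneg : ∀ t ∈ Ioo a b, R t ≤ 0) :
    AntitoneOn (fun t => R t ^ 2 + S t ^ 2) (Icc a b) := by
  refine antitoneOn_of_hasDerivWithinAt_nonpos (convex_Icc a b) ((hR.pow 2).add (hS.pow 2))
    (fun t ht => ?_) (fun t ht => ?_) (f' := fun t => 2 * v ^ 2 * R t) <;>
    rw [interior_Icc] at ht
  · exact (hdyn t ht).hasDerivAt_normSq.hasDerivWithinAt
  · exact mul_nonpos_of_nonneg_of_nonpos (by positivity) (hRneg t ht)

theorem not_forall_in_quadrant (hkcf : 0 ≤ kcf) (hv : v ≠ 0) (hc : c = kcf / v ^ 2)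
    (hR : ContinuousOn R (Ici 0)) (hS : ContinuousOn S (Ici 0))
    (hdyn : ∀ t, 0 ≤ t → R t < 0 → CircularFieldDynamicsAt kcf v R S t)
    (heps0 : S 0 + c * R 0 ≠ 0) : ¬ ∀ t, 0 ≤ t → R t < 0 ∧ 0 < S t := by
  intro hquad
  set ε0 := S 0 + c * R 0
  have hdyn' : ∀ t, 0 ≤ t → CircularFieldDynamicsAt kcf v R S t :=
    fun t ht => hdyn t ht (hquad t ht).1
  have hRI (t : ℝ) : ContinuousOn R (Icc 0 t) := hR.mono Icc_subset_Ici_self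
  have hSI (t : ℝ) : ContinuousOn S (Icc 0 t) := hS.mono Icc_subset_Ici_self
  have heps (t : ℝ) (ht : 0 ≤ t) : ε0 ^ 2 ≤ (S t + c * R t) ^ 2 :=
    monotoneOn_sq_eps hkcf hv hc (hRI t) (hSI t) (fun s hs => hdyn' s hs.1.le)
      (fun s hs => (hquad s hs.1.le).2) (left_mem_Icc.2 ht) (right_mem_Icc.2 ht) ht
  have hN (t : ℝ) (ht : 0 ≤ t) : R t ^ 2 + S t ^ 2 ≤ R 0 ^ 2 + S 0 ^ 2 :=
    antitoneOn_normSq (hRI t) (hSI t) (fun s hs => hdyn' s hs.1.le)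
      (fun s hs => (hquad s hs.1.le).1.le) (left_mem_Icc.2 ht) (right_mem_Icc.2 ht) ht
  have hε0 (t : ℝ) (ht : 0 ≤ t) : ε0 ^ 2 ≤ ε0 * (S t + c * R t) :=
    sq_le_mul_of_forall_sq_le (g := fun t => S t + c * R t) (hS.add (continuousOn_const.mul hR))
      heps0 heps ht
  have hN0 : 0 < R 0 ^ 2 + S 0 ^ 2 := by have := (hquad 0 le_rfl).2; positivity
  -- The polar angle, oriented by the sign of `ε0`, is bounded yet grows at least linearly.
  refine not_bddAbove_image_Ici_of_le_deriv (f := fun t => -ε0 * arctan (S t / R t))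
    (f' := fun t => -ε0 * (-(v ^ 2 * (S t + c * R t)) / (R t ^ 2 + S t ^ 2)))
    (δ := v ^ 2 * ε0 ^ 2 / (R 0 ^ 2 + S 0 ^ 2)) (by positivity)
    (continuousOn_const.mul (continuous_arctan.comp_continuousOn
      (hS.div hR fun t ht => (hquad t ht).1.ne)))
    (fun t ht => ((hdyn' t ht.le).hasDerivAt_arctan_div hv hc (hquad t ht.le).1.ne).const_mul _)
    (fun t ht => ?_) ⟨|ε0| * (π / 2), ?_⟩
  · have hNt : 0 < R t ^ 2 + S t ^ 2 := by have := (hquad t ht.le).2; positivity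
    calc v ^ 2 * ε0 ^ 2 / (R 0 ^ 2 + S 0 ^ 2)
        ≤ v ^ 2 * (ε0 * (S t + c * R t)) / (R t ^ 2 + S t ^ 2) :=
          div_le_div₀ (mul_nonneg (sq_nonneg v) ((sq_nonneg ε0).trans (hε0 t ht.le)))
            (mul_le_mul_of_nonneg_left (hε0 t ht.le) (sq_nonneg v)) hNt (hN t ht.le)
      _ = _ := by ring
  · rintro _ ⟨t, -, rfl⟩
    calc -ε0 * arctan (S t / R t) ≤ |-ε0 * arctan (S t / R t)| := le_abs_self _
      _ = |ε0| * |arctan (S t / R t)| := by rw [abs_mul, abs_neg]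
      _ ≤ |ε0| * (π / 2) := by
          gcongr
          exact abs_le.2 ⟨(neg_pi_div_two_lt_arctan _).le, (arctan_lt_pi_div_two _).le⟩

end

theorem sq_add_mul_le_max_sq_mul {x y c : ℝ} (hc : 0 ≤ c) (hxy : x * y ≤ 0) :
    (y + c * x) ^ 2 ≤ max c 1 ^ 2 * (x ^ 2 + y ^ 2) := by
  have hc2 : c ^ 2 ≤ max c 1 ^ 2 := pow_le_pow_left₀ hc (le_max_left c 1) 2
  have h12 : 1 ≤ max c 1 ^ 2 := one_le_pow₀ (le_max_right c 1)
  nlinarith [mul_nonpos_of_nonneg_of_nonpos hc hxy, sq_nonneg x, sq_nonneg y]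

/-- Lemma 4 of the paper, collision-free part: if `R(0) < 0`, `S(0) > 0`
and `ε(0) = S(0) + c·R(0) ≠ 0` (with `c = kcf/v²`), then there is a time `τ > 0` with
`R(τ) = 0` or `S(τ) = 0`, and on `[0, τ]` one has `|ε(t)| ≥ |ε(0)|` and
`R(t)² + S(t)² ≥ ε(0)²/max(c,1)²`; in particular `(R(t),S(t)) ≠ (0,0)`, i.e. no collision
occurs (in terms of the robot, `‖x(t)‖ = √(R²+S²)/v ≥ |ε(0)|/(max(c,1)·v)`). -/
theorem cf_critical_quadrant_no_collision
    (kcf v c : ℝ) (hkcf : 0 < kcf) (hv : 0 < v) (hc : c = kcf / v ^ 2)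
    (R S : ℝ → ℝ)
    (hRdiff : ∀ t, 0 ≤ t → DifferentiableAt ℝ R t)
    (hSdiff : ∀ t, 0 ≤ t → DifferentiableAt ℝ S t)
    (hR : ∀ t, 0 ≤ t → (R t, S t) ≠ (0, 0) →
      HasDerivAt R (kcf * R t * S t / (R t ^ 2 + S t ^ 2) + v ^ 2) t)
    (hS : ∀ t, 0 ≤ t → (R t, S t) ≠ (0, 0) →
      HasDerivAt S (-(kcf * R t ^ 2 / (R t ^ 2 + S t ^ 2))) t)
    (hR0 : R 0 < 0) (hS0 : 0 < S 0) (heps0 : S 0 + c * R 0 ≠ 0) :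
    ∃ τ : ℝ, 0 < τ ∧ (R τ = 0 ∨ S τ = 0) ∧
      ∀ t ∈ Set.Icc (0 : ℝ) τ,
        |S 0 + c * R 0| ≤ |S t + c * R t| ∧
        (S 0 + c * R 0) ^ 2 / (max c 1) ^ 2 ≤ R t ^ 2 + S t ^ 2 ∧
        (R t, S t) ≠ (0, 0) := by
  have hRc : ContinuousOn R (Ici 0) := fun t ht => (hRdiff t ht).continuousAt.continuousWithinAt
  have hSc : ContinuousOn S (Ici 0) := fun t ht => (hSdiff t ht).continuousAt.continuousWithinAt
  have hdyn (t : ℝ) (ht : 0 ≤ t) (hRt : R t < 0) :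
      CircularFieldDynamicsAt kcf v R S t := by
    have hne : (R t, S t) ≠ (0, 0) := by simp [hRt.ne]
    exact ⟨hR t ht hne, hS t ht hne⟩
  obtain ⟨τ, hτpos, hτ, hbefore⟩ := exists_first_exit_quadrant hRc hSc hR0 hS0
    (not_forall_in_quadrant hkcf.le hv.ne' hc hRc hSc hdyn heps0)
  refine ⟨τ, hτpos, mul_eq_zero.1 hτ, fun t ht => ?_⟩
  have hquad (s : ℝ) (hs : s ∈ Ioo 0 τ) : R s < 0 ∧ 0 < S s := hbefore s (Ioo_subset_Ico_self hs)
  have heps : (S 0 + c * R 0) ^ 2 ≤ (S t + c * R t) ^ 2 :=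
    monotoneOn_sq_eps hkcf.le hv.ne' hc (hRc.mono Icc_subset_Ici_self)
      (hSc.mono Icc_subset_Ici_self) (fun s hs => hdyn s hs.1.le (hquad s hs).1)
      (fun s hs => (hquad s hs).2) (left_mem_Icc.2 hτpos.le) ht ht.1
  have hRS : R t * S t ≤ 0 := by
    rcases ht.2.lt_or_eq with htτ | rfl
    · exact (mul_neg_of_neg_of_pos (hbefore t ⟨ht.1, htτ⟩).1 (hbefore t ⟨ht.1, htτ⟩).2).le
    · exact hτ.le
  have hdist : (S 0 + c * R 0) ^ 2 / max c 1 ^ 2 ≤ R t ^ 2 + S t ^ 2 :=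
    (div_le_iff₀' (by positivity)).2
      (heps.trans (sq_add_mul_le_max_sq_mul (hc ▸ by positivity) hRS))
  refine ⟨sq_le_sq.1 heps, hdist, fun h => ?_⟩
  obtain ⟨hRt, hSt⟩ := Prod.mk.inj h
  have : 0 < (S 0 + c * R 0) ^ 2 / max c 1 ^ 2 := by positivity
  simp only [hRt, hSt] at hdist
  linarith
end

section
/- Suppose R(0) < 0 and S(0) > 0. (a) If ε(0) < 0, then there exists τ ∈ (0, S(0)·(1+c²)/kcf] such that S(τ) = 0, and R(t) < 0, S(t) > 0 for all t ∈ [0, τ). (b) If ε(0) > 0 and c ≥ 1, then there exists τ ∈ (0, −R(0)·(c+c³)/kcf] such that R(τ) = 0 or S(τ) = 0. (c) If ε(0) > 0 and c < 1, then there exists τ ∈ (0, −2·R(0)/kcf] such that R(τ) = 0 or S(τ) = 0. In each case the trajectory leaves the quadrant {R < 0, S > 0} within the stated explicit time bound. -/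
/-!
Along the flow, `ε = S + c R` satisfies `ε' = kcf S ε / (R² + S²)`, so `ε` keeps its sign
as long as `S > 0`. The sign of `ε` pins the ratio `S / R` inside the quadrant `R < 0 < S`,
which turns into a uniform speed bound: `S' ≤ -kcf / (1 + c²)` when `ε < 0`, and when `ε > 0`
either `R' ≥ kcf / (c + c³)` (if `c ≥ 1`) or `R' ≥ v² - kcf / 2 > kcf / 2` (if `c < 1`).
Integrating the bound, the trajectory cannot stay in the quadrant beyond the stated time.
-/

open Set

section SignPersistence

variable {f : ℝ → ℝ} {a b : ℝ}

lemma pos_of_continuousOn_of_ne_zero (hf : ContinuousOn f (Icc a b))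
    (hne : ∀ t ∈ Icc a b, f t ≠ 0) (ha : 0 < f a) : ∀ t ∈ Icc a b, 0 < f t := by
  intro t ht
  by_contra! hft
  have hsub : Icc a t ⊆ Icc a b := Icc_subset_Icc le_rfl ht.2
  obtain ⟨z, hz, hfz⟩ := intermediate_value_Icc' ht.1 (hf.mono hsub) ⟨hft, ha.le⟩
  exact hne z (hsub hz) hfz

lemma pos_or_exists_first_zero (hf : ∀ t ∈ Icc a b, f t ≠ 0 → ContinuousAt f t)
    (ha : 0 < f a) :
    (∀ t ∈ Icc a b, 0 < f t) ∨ ∃ m ∈ Ioc a b, f m = 0 ∧ ∀ t ∈ Ico a m, 0 < f t := by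
  have pos_of_ne : ∀ s ≤ b, (∀ t ∈ Icc a s, f t ≠ 0) → ∀ t ∈ Icc a s, 0 < f t :=
    fun s hs hne => pos_of_continuousOn_of_ne_zero
      (fun t ht => (hf t ⟨ht.1, ht.2.trans hs⟩ (hne t ht)).continuousWithinAt) hne ha
  by_cases hzero : ∃ t ∈ Icc a b, f t = 0
  swap
  · push Not at hzero
    exact .inl (pos_of_ne b le_rfl hzero)
  right
  set Z := {t ∈ Icc a b | f t = 0}
  have hbdd : BddBelow Z := ⟨a, fun t ht => ht.1.1⟩
  have hclosure : sInf Z ∈ closure Z := csInf_mem_closure hzero hbdd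
  have hm : sInf Z ∈ Icc a b := isClosed_Icc.closure_subset_iff.2 (sep_subset _ _) hclosure
  have hpos : ∀ t ∈ Ico a (sInf Z), 0 < f t := fun t ht =>
    pos_of_ne t (ht.2.le.trans hm.2)
      (fun s hs hfs => (csInf_le hbdd ⟨⟨hs.1, hs.2.trans (ht.2.le.trans hm.2)⟩, hfs⟩).not_gt
        (hs.2.trans_lt ht.2)) t ⟨ht.1, le_rfl⟩
  have hfm : f (sInf Z) = 0 := by
    by_contra hfm
    have := (hf _ hm hfm).continuousWithinAt.mem_closure_image hclosure
    rw [show f '' Z = {0} from (image_subset_iff.2 fun t ht => ht.2).antisymm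
      (by obtain ⟨z, hz⟩ := hzero; exact singleton_subset_iff.2 ⟨z, hz, hz.2⟩),
      closure_singleton] at this
    exact hfm this
  refine ⟨sInf Z, ⟨hm.1.lt_of_ne ?_, hm.2⟩, hfm, hpos⟩
  rintro h
  rw [← h] at hfm
  exact ha.ne' hfm

lemma pos_of_hasDerivAt_eq_mul_self {g : ℝ → ℝ}
    (hf : ∀ t ∈ Icc a b, HasDerivAt f (g t * f t) t) (hg : ∀ t ∈ Icc a b, 0 ≤ g t)
    (ha : 0 < f a) : ∀ t ∈ Icc a b, 0 < f t := by
  obtain hpos | ⟨m, hm, hfm, hpos⟩ :=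
    pos_or_exists_first_zero (fun t ht _ => (hf t ht).continuousAt) ha
  · exact hpos
  have hsub : Icc a m ⊆ Icc a b := Icc_subset_Icc le_rfl hm.2
  have hmono : MonotoneOn f (Icc a m) := by
    refine monotoneOn_of_hasDerivWithinAt_nonneg (convex_Icc a m)
      (fun t ht => (hf t (hsub ht)).continuousAt.continuousWithinAt)
      (fun t ht => (hf t (hsub (interior_subset ht))).hasDerivWithinAt) fun t ht => ?_
    rw [interior_Icc] at ht
    exact mul_nonneg (hg t (hsub (Ioo_subset_Icc_self ht)))
      (hpos t (Ioo_subset_Ico_self ht)).le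
  have := hmono (left_mem_Icc.2 hm.1.le) (right_mem_Icc.2 hm.1.le) hm.1.le
  linarith

end SignPersistence

lemma mul_sub_le_sub_of_le_hasDerivAt {f f' : ℝ → ℝ} {a b k : ℝ} (hab : a ≤ b)
    (hf : ∀ t ∈ Icc a b, HasDerivAt f (f' t) t) (hk : ∀ t ∈ Icc a b, k ≤ f' t) :
    k * (b - a) ≤ f b - f a := by
  refine (convex_Icc a b).mul_sub_le_image_sub_of_le_deriv
    (fun t ht => (hf t ht).continuousAt.continuousWithinAt)
    (fun t ht => (hf t (interior_subset ht)).differentiableAt.differentiableWithinAt)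
    (fun t ht => ?_) a (left_mem_Icc.2 hab) b (right_mem_Icc.2 hab) hab
  rw [(hf t (interior_subset ht)).deriv]
  exact hk t (interior_subset ht)

section SpeedBounds

variable {k c x y : ℝ}

lemma div_one_add_sq_le_mul_sq_div (hk : 0 ≤ k) (hy : 0 < y) (hxy : y + c * x < 0) :
    k / (1 + c ^ 2) ≤ k * x ^ 2 / (x ^ 2 + y ^ 2) := by
  rw [div_le_div_iff₀ (by positivity) (by positivity)]
  have hgap : 0 < (-(c * x) - y) * (-(c * x) + y) := mul_pos (by linarith) (by linarith)
  nlinarith [mul_nonneg hk hgap.le]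

/-- Since `y > -c x ≥ -x > 0`, both factors of
`c x² + (1 + c²) x y + c y² = (c x + y)(x + c y)` are nonnegative. -/
lemma div_add_cube_le (hk : 0 ≤ k) (hc : 1 ≤ c) (hx : x < 0) (hxy : 0 < y + c * x) :
    k / (c + c ^ 3) ≤ k * x * y / (x ^ 2 + y ^ 2) + k / c := by
  have hc0 : 0 < c := by linarith
  have hy : 0 < y := by nlinarith
  have hD : 0 < x ^ 2 + y ^ 2 := by positivity
  have hfactor : 0 ≤ (y + c * x) * (c * y + x) :=
    mul_nonneg hxy.le (by nlinarith [mul_nonneg (sub_nonneg.2 hc) hy.le])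
  rw [div_add_div _ _ hD.ne' hc0.ne', div_le_div_iff₀ (by positivity) (by positivity)]
  nlinarith [mul_nonneg hk hfactor, mul_nonneg (mul_nonneg hk hc0.le) hfactor]

lemma neg_half_le_mul_div_sq_add_sq (hk : 0 ≤ k) : -(k / 2) ≤ k * x * y / (x ^ 2 + y ^ 2) := by
  rcases (add_nonneg (sq_nonneg x) (sq_nonneg y)).eq_or_lt with hD | hD
  · rw [← hD, div_zero]
    linarith
  · rw [le_div_iff₀ hD]
    nlinarith [mul_nonneg hk (sq_nonneg (x + y))]

end SpeedBounds

def IsCircularFieldSolution (kcf v : ℝ) (R S : ℝ → ℝ) : Prop :=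
  ∀ t, 0 ≤ t → (R t, S t) ≠ (0, 0) →
    HasDerivAt R (kcf * R t * S t / (R t ^ 2 + S t ^ 2) + v ^ 2) t ∧
    HasDerivAt S (-(kcf * R t ^ 2 / (R t ^ 2 + S t ^ 2))) t

namespace IsCircularFieldSolution

variable {kcf v c : ℝ} {R S : ℝ → ℝ} (hsol : IsCircularFieldSolution kcf v R S)
include hsol

lemma hasDerivAt_R_of_S_ne_zero {t : ℝ} (ht : 0 ≤ t) (hSt : S t ≠ 0) :
    HasDerivAt R (kcf * R t * S t / (R t ^ 2 + S t ^ 2) + v ^ 2) t :=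
  (hsol t ht (by simp [hSt])).1

lemma continuousAt_R {t : ℝ} (ht : 0 ≤ t) (hRt : R t ≠ 0) : ContinuousAt R t :=
  (hsol t ht (by simp [hRt])).1.continuousAt

lemma continuousAt_S {t : ℝ} (ht : 0 ≤ t) (hSt : S t ≠ 0) : ContinuousAt S t :=
  (hsol t ht (by simp [hSt])).2.continuousAt

lemma hasDerivAt_eps (hcv : c * v ^ 2 = kcf) {t : ℝ} (ht : 0 ≤ t) (hSt : S t ≠ 0) :
    HasDerivAt (fun u => S u + c * R u)
      (kcf * S t / (R t ^ 2 + S t ^ 2) * (S t + c * R t)) t := by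
  obtain ⟨hR, hS⟩ := hsol t ht (by simp [hSt])
  refine (hS.add (hR.const_mul c)).congr_deriv ?_
  have hD : R t ^ 2 + S t ^ 2 ≠ 0 := by have := sq_pos_of_ne_zero hSt; positivity
  field_simp
  linear_combination (R t ^ 2 + S t ^ 2) * hcv

lemma eps_pos (hcv : c * v ^ 2 = kcf) (hkcf : 0 ≤ kcf) {b : ℝ}
    (hS : ∀ t ∈ Icc 0 b, 0 < S t) (h0 : 0 < S 0 + c * R 0) :
    ∀ t ∈ Icc 0 b, 0 < S t + c * R t :=
  pos_of_hasDerivAt_eq_mul_self (fun t ht => hsol.hasDerivAt_eps hcv ht.1 (hS t ht).ne')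
    (fun t ht => div_nonneg (mul_nonneg hkcf (hS t ht).le) (by positivity)) h0

lemma eps_neg (hcv : c * v ^ 2 = kcf) (hkcf : 0 ≤ kcf) {b : ℝ}
    (hS : ∀ t ∈ Icc 0 b, 0 < S t) (h0 : S 0 + c * R 0 < 0) :
    ∀ t ∈ Icc 0 b, S t + c * R t < 0 := by
  have := pos_of_hasDerivAt_eq_mul_self (f := fun u => -(S u + c * R u))
    (g := fun t => kcf * S t / (R t ^ 2 + S t ^ 2))
    (fun t ht => (hsol.hasDerivAt_eps hcv ht.1 (hS t ht).ne').fun_neg.congr_deriv (by ring))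
    (fun t ht => div_nonneg (mul_nonneg hkcf (hS t ht).le) (by positivity)) (neg_pos.2 h0)
  exact fun t ht => neg_pos.1 (this t ht)

lemma exists_S_eq_zero_of_eps_neg (hcv : c * v ^ 2 = kcf) (hkcf : 0 < kcf) (hc : 0 < c)
    (hS0 : 0 < S 0) (hε0 : S 0 + c * R 0 < 0) :
    ∃ τ : ℝ, 0 < τ ∧ τ ≤ S 0 * (1 + c ^ 2) / kcf ∧ S τ = 0 ∧
      ∀ t ∈ Ico (0 : ℝ) τ, R t < 0 ∧ 0 < S t := by
  set T := S 0 * (1 + c ^ 2) / kcf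
  obtain hpos | ⟨τ, hτ, hSτ, hpos⟩ :=
    pos_or_exists_first_zero (fun t ht => hsol.continuousAt_S ht.1) hS0
  · have hT : 0 < T := by positivity
    have hε := hsol.eps_neg hcv hkcf.le hpos hε0
    have hdecay := mul_sub_le_sub_of_le_hasDerivAt (f := fun u => -S u) hT.le
      (fun t ht => (hsol t ht.1 (by simp [(hpos t ht).ne'])).2.neg)
      (fun t ht => by
        simpa using div_one_add_sq_le_mul_sq_div hkcf.le (hpos t ht) (hε t ht))
    have hkT : kcf / (1 + c ^ 2) * T = S 0 := by
      simp only [T]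
      field_simp
    have := hpos T (right_mem_Icc.2 hT.le)
    simp only [sub_zero, hkT] at hdecay
    linarith
  refine ⟨τ, hτ.1, hτ.2, hSτ, fun t ht => ⟨?_, hpos t ht⟩⟩
  have hε := hsol.eps_neg hcv hkcf.le (b := t)
    (fun s hs => hpos s ⟨hs.1, hs.2.trans_lt ht.2⟩) hε0 t ⟨ht.1, le_rfl⟩
  nlinarith [hpos t ht]

lemma exists_R_or_S_eq_zero_of_eps_pos (hcv : c * v ^ 2 = kcf) (hkcf : 0 ≤ kcf)
    (hR0 : R 0 < 0) (hS0 : 0 < S 0) (hε0 : 0 < S 0 + c * R 0) {k : ℝ} (hk : 0 < k)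
    (hbound : ∀ t, R t < 0 → 0 < S t → 0 < S t + c * R t →
      k ≤ kcf * R t * S t / (R t ^ 2 + S t ^ 2) + v ^ 2) :
    ∃ τ : ℝ, 0 < τ ∧ τ ≤ -R 0 / k ∧ (R τ = 0 ∨ S τ = 0) := by
  set T := -R 0 / k
  have hT : 0 < T := div_pos (neg_pos.2 hR0) hk
  by_contra! hstay
  have hne : ∀ t ∈ Icc 0 T, R t ≠ 0 ∧ S t ≠ 0 := by
    rintro t ⟨ht0, htT⟩
    rcases ht0.eq_or_lt with rfl | ht0
    · exact ⟨hR0.ne, hS0.ne'⟩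
    · exact hstay t ht0 htT
  have hS : ∀ t ∈ Icc 0 T, 0 < S t := pos_of_continuousOn_of_ne_zero
    (fun t ht => (hsol.continuousAt_S ht.1 (hne t ht).2).continuousWithinAt)
    (fun t ht => (hne t ht).2) hS0
  have hR : ∀ t ∈ Icc 0 T, R t < 0 := fun t ht => neg_pos.1 <|
    pos_of_continuousOn_of_ne_zero (f := fun u => -R u)
      (fun t ht => (hsol.continuousAt_R ht.1 (hne t ht).1).neg.continuousWithinAt)
      (fun t ht => neg_ne_zero.2 (hne t ht).1) (neg_pos.2 hR0) t ht
  have hε := hsol.eps_pos hcv hkcf hS hε0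
  have hgrowth := mul_sub_le_sub_of_le_hasDerivAt hT.le
    (fun t ht => hsol.hasDerivAt_R_of_S_ne_zero ht.1 (hS t ht).ne')
    (fun t ht => hbound t (hR t ht) (hS t ht) (hε t ht))
  have hkT : k * (T - 0) = -R 0 := by
    simp only [T, sub_zero]
    field_simp
  have := hR T (right_mem_Icc.2 hT.le)
  linarith

end IsCircularFieldSolution

theorem cf_leave_critical_quadrant_general
    (kcf v c : ℝ) (hkcf : 0 < kcf) (hv : 0 < v) (hc : c = kcf / v ^ 2)
    (R S : ℝ → ℝ)
    (hR : ∀ t, 0 ≤ t → (R t, S t) ≠ (0, 0) →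
      HasDerivAt R (kcf * R t * S t / (R t ^ 2 + S t ^ 2) + v ^ 2) t)
    (hS : ∀ t, 0 ≤ t → (R t, S t) ≠ (0, 0) →
      HasDerivAt S (-(kcf * R t ^ 2 / (R t ^ 2 + S t ^ 2))) t)
    (hR0 : R 0 < 0) (hS0 : 0 < S 0) :
    (S 0 + c * R 0 < 0 →
      ∃ τ : ℝ, 0 < τ ∧ τ ≤ S 0 * (1 + c ^ 2) / kcf ∧ S τ = 0 ∧
        ∀ t ∈ Set.Ico (0 : ℝ) τ, R t < 0 ∧ 0 < S t) ∧
    (0 < S 0 + c * R 0 → 1 ≤ c →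
      ∃ τ : ℝ, 0 < τ ∧ τ ≤ -R 0 * (c + c ^ 3) / kcf ∧ (R τ = 0 ∨ S τ = 0)) ∧
    (0 < S 0 + c * R 0 → c < 1 →
      ∃ τ : ℝ, 0 < τ ∧ τ ≤ -(2 * R 0) / kcf ∧ (R τ = 0 ∨ S τ = 0)) := by
  have hsol : IsCircularFieldSolution kcf v R S := fun t ht h => ⟨hR t ht h, hS t ht h⟩
  have hcpos : 0 < c := hc ▸ by positivity
  have hcv : c * v ^ 2 = kcf := by rw [hc]; field_simp
  refine ⟨hsol.exists_S_eq_zero_of_eps_neg hcv hkcf hcpos hS0, fun hε0 hc1 => ?_,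
    fun hε0 hc1 => ?_⟩
  · have hv2 : v ^ 2 = kcf / c := by rw [← hcv]; field_simp
    rw [← div_div_eq_mul_div]
    exact hsol.exists_R_or_S_eq_zero_of_eps_pos hcv hkcf.le hR0 hS0 hε0 (by positivity)
      fun t hRt _ hεt => hv2 ▸ div_add_cube_le hkcf.le hc1 hRt hεt
  · have hkv : kcf ≤ v ^ 2 := by nlinarith
    rw [show -(2 * R 0) / kcf = -R 0 / (kcf / 2) by field_simp]
    exact hsol.exists_R_or_S_eq_zero_of_eps_pos hcv hkcf.le hR0 hS0 hε0 (by positivity)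
      fun t _ _ _ => by linarith [neg_half_le_mul_div_sq_add_sq (x := R t) (y := S t) hkcf.le]

/-- Part I of the proof of Lemma 4: starting in the critical quadrant
`R(0) < 0`, `S(0) > 0`, the trajectory leaves the quadrant within an explicit time bound:
(a) if `ε(0) < 0`, at some `τ ≤ S(0)(1+c²)/kcf` with `S(τ) = 0` (and `R < 0`, `S > 0`
before `τ`); (b) if `ε(0) > 0` and `c ≥ 1`, at some `τ ≤ −R(0)(c+c³)/kcf`;
(c) if `ε(0) > 0` and `c < 1`, at some `τ ≤ −2R(0)/kcf`. Here `ε = S + c·R`, `c = kcf/v²`. -/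
theorem cf_leave_critical_quadrant
    (kcf v c : ℝ) (hkcf : 0 < kcf) (hv : 0 < v) (hc : c = kcf / v ^ 2)
    (R S : ℝ → ℝ)
    (hRdiff : ∀ t, 0 ≤ t → DifferentiableAt ℝ R t)
    (hSdiff : ∀ t, 0 ≤ t → DifferentiableAt ℝ S t)
    (hR : ∀ t, 0 ≤ t → (R t, S t) ≠ (0, 0) →
      HasDerivAt R (kcf * R t * S t / (R t ^ 2 + S t ^ 2) + v ^ 2) t)
    (hS : ∀ t, 0 ≤ t → (R t, S t) ≠ (0, 0) →
      HasDerivAt S (-(kcf * R t ^ 2 / (R t ^ 2 + S t ^ 2))) t)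
    (hR0 : R 0 < 0) (hS0 : 0 < S 0) :
    (S 0 + c * R 0 < 0 →
      ∃ τ : ℝ, 0 < τ ∧ τ ≤ S 0 * (1 + c ^ 2) / kcf ∧ S τ = 0 ∧
        ∀ t ∈ Set.Ico (0 : ℝ) τ, R t < 0 ∧ 0 < S t) ∧
    (0 < S 0 + c * R 0 → 1 ≤ c →
      ∃ τ : ℝ, 0 < τ ∧ τ ≤ -R 0 * (c + c ^ 3) / kcf ∧ (R τ = 0 ∨ S τ = 0)) ∧
    (0 < S 0 + c * R 0 → c < 1 →
      ∃ τ : ℝ, 0 < τ ∧ τ ≤ -(2 * R 0) / kcf ∧ (R τ = 0 ∨ S τ = 0)) :=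
  cf_leave_critical_quadrant_general kcf v c hkcf hv hc R S hR hS hR0 hS0
end

section
/- Suppose R(0) < 0, S(0) > 0 and ε(0) = 0, and set τ = S(0)·(1+c²)/kcf. Then for all t ∈ [0, τ]: ε(t) = 0 (i.e., S(t) = −c·R(t)) and S(t) = S(0) − (kcf/(1+c²))·t. In particular S(τ) = 0 and R(τ) = 0, i.e., a collision with the point obstacle occurs exactly at time τ. -/
/-!
Because `c v² = kcf`, away from collisions `ε = S + cR` solves the linear equation
`ε' = (kcf S / (R² + S²)) ε`, so by Grönwall it stays `0` once it vanishes. On the ray `ε = 0`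
the equation for `S` reduces to `S' = -kcf / (1 + c²)`, so `S` decreases linearly and stays
positive before `τ`; this rules out an earlier collision, and a real-induction argument carries the
ray along all of `[0, τ]`. At `τ` both `S` and `R = -S / c` vanish.
-/

open Set Filter Topology

theorem eqOn_zero_of_hasDerivWithinAt_smul_self {E : Type*} [NormedAddCommGroup E]
    [NormedSpace ℝ E] {f : ℝ → E} {g : ℝ → ℝ} {a b : ℝ}
    (hf : ContinuousOn f (Icc a b)) (hg : ContinuousOn g (Icc a b))
    (hf' : ∀ t ∈ Ico a b, HasDerivWithinAt f (g t • f t) (Ici t) t) (ha : f a = 0) :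
    EqOn f 0 (Icc a b) := by
  obtain ⟨K, hK⟩ := isCompact_Icc.exists_bound_of_continuousOn hg
  have hbound : ∀ t ∈ Ico a b, ‖g t • f t‖ ≤ K * ‖f t‖ + 0 := fun t ht => by
    rw [norm_smul, add_zero]
    exact mul_le_mul_of_nonneg_right (hK t (Ico_subset_Icc_self ht)) (norm_nonneg _)
  intro t ht
  have := norm_le_gronwallBound_of_norm_deriv_right_le hf hf' (δ := 0) (by simp [ha]) hbound t ht
  simpa [gronwallBound_ε0_δ0] using this

theorem sq_add_sq_ne_zero_of_ne {r s : ℝ} (h : (r, s) ≠ (0, 0)) : r ^ 2 + s ^ 2 ≠ 0 := by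
  contrapose! h
  have hr : r = 0 := by nlinarith [sq_nonneg r, sq_nonneg s]
  have hs : s = 0 := by nlinarith [sq_nonneg r, sq_nonneg s]
  simp [hr, hs]

def CircularFieldDynamics (kcf v : ℝ) (R S : ℝ → ℝ) : Prop :=
  ∀ t, 0 ≤ t → (R t, S t) ≠ (0, 0) →
    HasDerivAt R (kcf * R t * S t / (R t ^ 2 + S t ^ 2) + v ^ 2) t ∧
      HasDerivAt S (-(kcf * R t ^ 2 / (R t ^ 2 + S t ^ 2))) t

section CircularField

variable {kcf v c : ℝ} {R S : ℝ → ℝ}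

theorem cf_deriv_eps_eq (hcv : c * v ^ 2 = kcf) {r s : ℝ} (hrs : (r, s) ≠ (0, 0)) :
    -(kcf * r ^ 2 / (r ^ 2 + s ^ 2)) + c * (kcf * r * s / (r ^ 2 + s ^ 2) + v ^ 2) =
      kcf * s / (r ^ 2 + s ^ 2) * (s + c * r) := by
  have := sq_add_sq_ne_zero_of_ne hrs
  rw [← hcv]
  field_simp
  ring

theorem cf_deriv_S_eq_of_eps_eq_zero {r s : ℝ} (hrs : (r, s) ≠ (0, 0)) (hε : s + c * r = 0) :
    -(kcf * r ^ 2 / (r ^ 2 + s ^ 2)) = -(kcf / (1 + c ^ 2)) := by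
  have hs : s = -(c * r) := by linarith
  have hr : r ≠ 0 := by rintro rfl; simp_all
  subst hs
  field_simp

theorem CircularFieldDynamics.stays_on_ray_of_ne_zero (hsol : CircularFieldDynamics kcf v R S)
    (hcv : c * v ^ 2 = kcf) {a b : ℝ} (ha : 0 ≤ a)
    (hne : ∀ t ∈ Icc a b, (R t, S t) ≠ (0, 0)) (hεa : S a + c * R a = 0) :
    ∀ t ∈ Icc a b, S t + c * R t = 0 ∧ S t = S a - kcf / (1 + c ^ 2) * (t - a) := by
  have hR (t) (ht : t ∈ Icc a b) := (hsol t (ha.trans ht.1) (hne t ht)).1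
  have hS (t) (ht : t ∈ Icc a b) := (hsol t (ha.trans ht.1) (hne t ht)).2
  have hRc : ContinuousOn R (Icc a b) := fun t ht => (hR t ht).continuousAt.continuousWithinAt
  have hSc : ContinuousOn S (Icc a b) := fun t ht => (hS t ht).continuousAt.continuousWithinAt
  have hε : EqOn (fun t => S t + c * R t) 0 (Icc a b) := by
    refine eqOn_zero_of_hasDerivWithinAt_smul_self (hSc.add (hRc.const_smul c))
      (g := fun t => kcf * S t / (R t ^ 2 + S t ^ 2)) ?_ (fun t ht => ?_) hεa
    · exact (continuousOn_const.mul hSc).div ((hRc.pow 2).add (hSc.pow 2))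
        fun t ht => sq_add_sq_ne_zero_of_ne (hne t ht)
    · have ht' := Ico_subset_Icc_self ht
      rw [smul_eq_mul, ← cf_deriv_eps_eq hcv (hne t ht')]
      exact ((hS t ht').add ((hR t ht').const_mul c)).hasDerivWithinAt
  refine fun t ht => ⟨hε ht, eq_of_has_deriv_right_eq (fun t ht => ?_)
    (fun t _ => ((hasDerivAt_id t).sub_const a |>.const_mul _ |>.const_sub _).hasDerivWithinAt)
    hSc (by fun_prop) (by simp) t ht⟩
  have ht' := Ico_subset_Icc_self ht
  simpa [cf_deriv_S_eq_of_eps_eq_zero (hne t ht') (hε ht')] using (hS t ht').hasDerivWithinAt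

theorem CircularFieldDynamics.stays_on_ray_until_collision
    (hsol : CircularFieldDynamics kcf v R S) (hcv : c * v ^ 2 = kcf) (hkcf : 0 < kcf) {T : ℝ}
    (hRc : ContinuousOn R (Icc 0 T)) (hSc : ContinuousOn S (Icc 0 T))
    (hε0 : S 0 + c * R 0 = 0) (hT : kcf / (1 + c ^ 2) * T ≤ S 0) :
    ∀ t ∈ Icc 0 T, S t + c * R t = 0 ∧ S t = S 0 - kcf / (1 + c ^ 2) * t := by
  set k := kcf / (1 + c ^ 2)
  have hk : 0 < k := by positivity
  have hclosed : IsClosed ({t | S t + c * R t = 0 ∧ S t = S 0 - k * t} ∩ Icc 0 T) := by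
    have hcont : ContinuousOn (fun t => (S t + c * R t, S t + k * t)) (Icc 0 T) := by fun_prop
    convert hcont.preimage_isClosed_of_isClosed isClosed_Icc (isClosed_singleton (x := (0, S 0)))
      using 1
    ext t
    simp only [mem_inter_iff, mem_ofPred_eq, mem_preimage, mem_singleton_iff, Prod.mk.injEq,
      eq_sub_iff_add_eq, and_comm]
  refine hclosed.Icc_subset_of_forall_mem_nhdsWithin ⟨hε0, by simp⟩ ?_
  rintro x ⟨⟨hεx, hSx⟩, hx0, hxT⟩
  have hSx_pos : 0 < S x := by nlinarith
  have hnex : (R x, S x) ≠ (0, 0) := fun h => hSx_pos.ne' (Prod.mk.inj h).2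
  have hpos : {t | 0 < S t} ∈ 𝓝[≥] x :=
    nhdsWithin_le_nhds ((hsol x hx0 hnex).2.continuousAt.eventually (lt_mem_nhds hSx_pos))
  obtain ⟨u, hxu, hu⟩ := mem_nhdsGE_iff_exists_Icc_subset.1 hpos
  have hray := hsol.stays_on_ray_of_ne_zero hcv hx0
    (fun t ht h => (hu ht : 0 < S t).ne' (Prod.mk.inj h).2) hεx
  refine mem_of_superset (nhdsWithin_mono _ Ioi_subset_Ici_self (Icc_mem_nhdsGE hxu))
    fun t ht => ⟨(hray t ht).1, ?_⟩
  rw [(hray t ht).2, hSx]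
  ring

end CircularField

theorem cf_collision_ray_leads_to_collision_general
    (kcf v c : ℝ) (hkcf : 0 < kcf) (hv : 0 < v) (hc : c = kcf / v ^ 2)
    (R S : ℝ → ℝ)
    (hRdiff : ∀ t, 0 ≤ t → DifferentiableAt ℝ R t)
    (hSdiff : ∀ t, 0 ≤ t → DifferentiableAt ℝ S t)
    (hR : ∀ t, 0 ≤ t → (R t, S t) ≠ (0, 0) →
      HasDerivAt R (kcf * R t * S t / (R t ^ 2 + S t ^ 2) + v ^ 2) t)
    (hS : ∀ t, 0 ≤ t → (R t, S t) ≠ (0, 0) →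
      HasDerivAt S (-(kcf * R t ^ 2 / (R t ^ 2 + S t ^ 2))) t)
    (hS0 : 0 < S 0) (heps0 : S 0 + c * R 0 = 0)
    (τ : ℝ) (hτ : τ = S 0 * (1 + c ^ 2) / kcf) :
    (∀ t ∈ Set.Icc (0 : ℝ) τ,
      S t + c * R t = 0 ∧ S t = S 0 - kcf / (1 + c ^ 2) * t) ∧
    S τ = 0 ∧ R τ = 0 := by
  have hcv : c * v ^ 2 = kcf := by rw [hc]; field_simp
  have hc0 : c ≠ 0 := by rw [hc]; positivity
  have hkτ : kcf / (1 + c ^ 2) * τ = S 0 := by rw [hτ]; field_simp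
  have hsol : CircularFieldDynamics kcf v R S := fun t ht h => ⟨hR t ht h, hS t ht h⟩
  have hray := hsol.stays_on_ray_until_collision hcv hkcf
    (fun t ht => (hRdiff t ht.1).continuousAt.continuousWithinAt)
    (fun t ht => (hSdiff t ht.1).continuousAt.continuousWithinAt) heps0 hkτ.le
  obtain ⟨hετ, hSτ⟩ := hray τ ⟨by rw [hτ]; positivity, le_rfl⟩
  rw [hkτ, sub_self] at hSτ
  refine ⟨hray, hSτ, ?_⟩
  rw [hSτ, zero_add, mul_eq_zero] at hετ
  exact hετ.resolve_left hc0

/-- collision case of Lemma 4: if `R(0) < 0`, `S(0) > 0` and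
`ε(0) = S(0) + c·R(0) = 0` (with `c = kcf/v²`), then with `τ = S(0)(1+c²)/kcf` one has
`ε(t) = 0` (i.e. `S(t) = −c·R(t)`) and `S(t) = S(0) − (kcf/(1+c²))·t` on `[0, τ]`;
in particular `S(τ) = 0` and `R(τ) = 0`, i.e. a collision occurs exactly at time `τ`. -/
theorem cf_collision_ray_leads_to_collision
    (kcf v c : ℝ) (hkcf : 0 < kcf) (hv : 0 < v) (hc : c = kcf / v ^ 2)
    (R S : ℝ → ℝ)
    (hRdiff : ∀ t, 0 ≤ t → DifferentiableAt ℝ R t)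
    (hSdiff : ∀ t, 0 ≤ t → DifferentiableAt ℝ S t)
    (hR : ∀ t, 0 ≤ t → (R t, S t) ≠ (0, 0) →
      HasDerivAt R (kcf * R t * S t / (R t ^ 2 + S t ^ 2) + v ^ 2) t)
    (hS : ∀ t, 0 ≤ t → (R t, S t) ≠ (0, 0) →
      HasDerivAt S (-(kcf * R t ^ 2 / (R t ^ 2 + S t ^ 2))) t)
    (hR0 : R 0 < 0) (hS0 : 0 < S 0) (heps0 : S 0 + c * R 0 = 0)
    (τ : ℝ) (hτ : τ = S 0 * (1 + c ^ 2) / kcf) :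
    (∀ t ∈ Set.Icc (0 : ℝ) τ,
      S t + c * R t = 0 ∧ S t = S 0 - kcf / (1 + c ^ 2) * t) ∧
    S τ = 0 ∧ R τ = 0 :=
  cf_collision_ray_leads_to_collision_general kcf v c hkcf hv hc R S hRdiff hSdiff hR hS hS0 heps0 τ
    hτ
end

section
/- Assume (R(0), S(0)) ≠ (0, 0). Then there exists a time τ > 0 with R(τ) = 0 and S(τ) = 0 (a collision with the point obstacle) if and only if R(0) < 0, S(0) > 0 and ε(0) = 0. In particular, a collision occurs only for initial conditions on the collision ray {S + cR = 0, R < 0, S > 0}, a set of measure zero. -/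
open Set

/-!
Along a collision-free trajectory the deviation `ε = S + c R` from the collision ray obeys the
linear equation `ε' = a ε` with `a = kcf S / (R² + S²)`, while `S' ≤ 0`.

If a first collision happens at `τ₀`, then `S ≥ 0` on `[0, τ₀]` because `S` decreases to
`S(τ₀) = 0`; hence `a ≥ 0` there, `ε²` is nondecreasing, and `ε(0)² ≤ ε(τ₀)² = 0`.

Conversely, if `ε(0) = 0` and no collision ever happened, uniqueness for the linear equation
(Grönwall) keeps `ε ≡ 0`; on the ray `S = -c R` the equation for `R` reduces to
`R' = v² / (1 + c²) > 0`, so `R` reaches `0` in finite time, and then so does `S`.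
-/

theorem exists_first_hitting_time {X : Type*} [TopologicalSpace X] [T1Space X] {f : ℝ → X}
    {x : X} {a b : ℝ} (hab : a ≤ b) (hf : ContinuousOn f (Icc a b)) (ha : f a ≠ x)
    (hb : f b = x) : ∃ τ ∈ Ioc a b, f τ = x ∧ ∀ t ∈ Ico a τ, f t ≠ x := by
  have hclosed : IsClosed (Icc a b ∩ f ⁻¹' {x}) :=
    hf.preimage_isClosed_of_isClosed isClosed_Icc isClosed_singleton
  obtain ⟨τ, ⟨hτ, hfτ⟩, hleast⟩ :=
    (isCompact_Icc.of_isClosed_subset hclosed inter_subset_left).exists_isLeast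
      ⟨b, right_mem_Icc.2 hab, hb⟩
  refine ⟨τ, ⟨lt_of_le_of_ne hτ.1 ?_, hτ.2⟩, hfτ, fun t ht hft => ?_⟩
  · rintro rfl
    exact ha hfτ
  · exact (hleast ⟨⟨ht.1, ht.2.le.trans hτ.2⟩, hft⟩).not_gt ht.2

theorem sq_monotoneOn_of_hasDerivAt_mul_self {f g : ℝ → ℝ} {a b : ℝ}
    (hf : ContinuousOn f (Icc a b)) (hf' : ∀ t ∈ Ioo a b, HasDerivAt f (g t * f t) t)
    (hg : ∀ t ∈ Ioo a b, 0 ≤ g t) : MonotoneOn (fun t => f t ^ 2) (Icc a b) := by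
  refine monotoneOn_of_hasDerivWithinAt_nonneg (f' := fun t => 2 * g t * f t ^ 2)
    (convex_Icc a b) (hf.pow 2) (fun t ht => ?_) (fun t ht => ?_) <;> rw [interior_Icc] at ht
  · exact ((hf' t ht).pow 2).hasDerivWithinAt.congr_deriv (by ring)
  · have := hg t ht
    positivity

theorem eqOn_zero_of_hasDerivAt_mul_self {f g : ℝ → ℝ} {a b : ℝ}
    (hg : ContinuousOn g (Icc a b)) (hf : ∀ t ∈ Icc a b, HasDerivAt f (g t * f t) t)
    (ha : f a = 0) : ∀ t ∈ Icc a b, f t = 0 := by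
  obtain ⟨K, hK⟩ := isCompact_Icc.exists_bound_of_continuousOn hg
  refine eq_zero_of_abs_deriv_le_mul_abs_self_of_eq_zero_right (K := K)
    (fun t ht => (hf t ht).continuousAt.continuousWithinAt)
    (fun t ht => (hf t (Ico_subset_Icc_self ht)).hasDerivWithinAt) ha (fun t ht => ?_)
  rw [norm_mul]
  gcongr
  exact hK t (Ico_subset_Icc_self ht)

theorem eq_add_mul_of_hasDerivAt_const {f : ℝ → ℝ} {α a b : ℝ}
    (hf : ∀ t ∈ Icc a b, HasDerivAt f α t) : ∀ t ∈ Icc a b, f t = f a + α * (t - a) := by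
  refine eq_of_has_deriv_right_eq (fun t ht => (hf t (Ico_subset_Icc_self ht)).hasDerivWithinAt)
    (fun t _ => ?_) (fun t ht => (hf t ht).continuousAt.continuousWithinAt)
    (by fun_prop) (by simp)
  simpa using ((hasDerivAt_id t).sub_const a).const_mul α |>.const_add (f a) |>.hasDerivWithinAt

section CircularField

variable {kcf v c : ℝ} {R S : ℝ → ℝ}

theorem hasDerivAt_rayDeviation {t : ℝ} (hcv : c * v ^ 2 = kcf)
    (hRS : 0 < R t ^ 2 + S t ^ 2)
    (hR : HasDerivAt R (kcf * R t * S t / (R t ^ 2 + S t ^ 2) + v ^ 2) t)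
    (hS : HasDerivAt S (-(kcf * R t ^ 2 / (R t ^ 2 + S t ^ 2))) t) :
    HasDerivAt (fun t => S t + c * R t)
      (kcf * S t / (R t ^ 2 + S t ^ 2) * (S t + c * R t)) t := by
  refine (hS.add (hR.const_mul c)).congr_deriv ?_
  rw [← hcv]
  field_simp
  ring

theorem hasDerivAt_of_mem_ray {t : ℝ} (hcv : c * v ^ 2 = kcf) (hRt : R t ≠ 0)
    (hray : S t + c * R t = 0)
    (hR : HasDerivAt R (kcf * R t * S t / (R t ^ 2 + S t ^ 2) + v ^ 2) t) :
    HasDerivAt R (v ^ 2 / (1 + c ^ 2)) t := by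
  refine hR.congr_deriv ?_
  rw [show S t = -(c * R t) by linarith, ← hcv]
  field_simp
  ring

theorem nonneg_and_rayDeviation_eq_zero_of_collision {T : ℝ} (hkcf : 0 ≤ kcf)
    (hcv : c * v ^ 2 = kcf) (hT : 0 ≤ T)
    (hRc : ContinuousOn R (Icc 0 T)) (hSc : ContinuousOn S (Icc 0 T))
    (hR : ∀ t ∈ Ioo 0 T, HasDerivAt R (kcf * R t * S t / (R t ^ 2 + S t ^ 2) + v ^ 2) t)
    (hS : ∀ t ∈ Ioo 0 T, HasDerivAt S (-(kcf * R t ^ 2 / (R t ^ 2 + S t ^ 2))) t)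
    (halive : ∀ t ∈ Ioo 0 T, (R t, S t) ≠ (0, 0)) (hRT : R T = 0) (hST : S T = 0) :
    0 ≤ S 0 ∧ S 0 + c * R 0 = 0 := by
  have hSanti : AntitoneOn S (Icc 0 T) := by
    refine antitoneOn_of_hasDerivWithinAt_nonpos (convex_Icc 0 T) hSc
      (f' := fun t => -(kcf * R t ^ 2 / (R t ^ 2 + S t ^ 2)))
      (fun t ht => ?_) (fun t ht => ?_) <;> rw [interior_Icc] at ht
    · exact (hS t ht).hasDerivWithinAt
    · have := sq_add_sq_pos_of_ne_zero (halive t ht)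
      have : 0 ≤ kcf * R t ^ 2 / (R t ^ 2 + S t ^ 2) := by positivity
      linarith
  have hSnonneg : ∀ t ∈ Icc 0 T, 0 ≤ S t := fun t ht =>
    hST ▸ hSanti ht (right_mem_Icc.2 hT) ht.2
  have hdev_sq := sq_monotoneOn_of_hasDerivAt_mul_self (hSc.add (hRc.const_mul c))
    (fun t ht => hasDerivAt_rayDeviation hcv (sq_add_sq_pos_of_ne_zero (halive t ht))
      (hR t ht) (hS t ht))
    (fun t ht => div_nonneg (mul_nonneg hkcf (hSnonneg t (Ioo_subset_Icc_self ht)))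
      (sq_add_sq_pos_of_ne_zero (halive t ht)).le)
    (left_mem_Icc.2 hT) (right_mem_Icc.2 hT) hT
  refine ⟨hSnonneg 0 (left_mem_Icc.2 hT), ?_⟩
  simpa [hRT, hST] using hdev_sq

theorem exists_collision_of_rayDeviation_eq_zero (hv : v ≠ 0) (hcv : c * v ^ 2 = kcf)
    (hR : ∀ t, 0 ≤ t → (R t, S t) ≠ (0, 0) →
      HasDerivAt R (kcf * R t * S t / (R t ^ 2 + S t ^ 2) + v ^ 2) t)
    (hS : ∀ t, 0 ≤ t → (R t, S t) ≠ (0, 0) →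
      HasDerivAt S (-(kcf * R t ^ 2 / (R t ^ 2 + S t ^ 2))) t)
    (hR0 : R 0 < 0) (hray : S 0 + c * R 0 = 0) : ∃ τ, 0 < τ ∧ R τ = 0 ∧ S τ = 0 := by
  by_contra hno
  have halive : ∀ t, 0 ≤ t → (R t, S t) ≠ (0, 0) := by
    rintro t ht hcol
    rw [Prod.mk.injEq] at hcol
    rcases ht.eq_or_lt with rfl | ht
    · exact hR0.ne hcol.1
    · exact hno ⟨t, ht, hcol⟩
  have hRd t (ht : 0 ≤ t) := hR t ht (halive t ht)
  have hSd t (ht : 0 ≤ t) := hS t ht (halive t ht)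
  have hpos t (ht : 0 ≤ t) := sq_add_sq_pos_of_ne_zero (halive t ht)
  have hRc : ContinuousOn R (Ici 0) := fun t ht => (hRd t ht).continuousAt.continuousWithinAt
  have hSc : ContinuousOn S (Ici 0) := fun t ht => (hSd t ht).continuousAt.continuousWithinAt
  have hdev : ∀ t, 0 ≤ t → S t + c * R t = 0 := fun t ht =>
    eqOn_zero_of_hasDerivAt_mul_self (g := fun t => kcf * S t / (R t ^ 2 + S t ^ 2))
      ((continuousOn_const.mul hSc).div ((hRc.pow 2).add (hSc.pow 2))
        (fun s hs => (hpos s hs).ne') |>.mono Icc_subset_Ici_self)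
      (fun s hs => hasDerivAt_rayDeviation hcv (hpos s hs.1) (hRd s hs.1) (hSd s hs.1))
      hray t ⟨ht, le_rfl⟩
  have hRne : ∀ t, 0 ≤ t → R t ≠ 0 := fun t ht hRt =>
    halive t ht (by rw [hRt, show S t = 0 by simpa [hRt] using hdev t ht])
  have hα : 0 < v ^ 2 / (1 + c ^ 2) := by positivity
  have hτ : 0 < -R 0 / (v ^ 2 / (1 + c ^ 2)) := div_pos (neg_pos.2 hR0) hα
  refine hRne _ hτ.le ?_
  rw [eq_add_mul_of_hasDerivAt_const (fun t ht => hasDerivAt_of_mem_ray hcv (hRne t ht.1)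
    (hdev t ht.1) (hRd t ht.1)) _ ⟨hτ.le, le_rfl⟩]
  field_simp
  ring

end CircularField

/-- Theorem 1 of the paper: for the auxiliary circular-field dynamics
with a point obstacle, a collision (`R(τ) = S(τ) = 0` at some time `τ > 0`) occurs if and
only if the initial condition lies on the collision ray: `R(0) < 0`, `S(0) > 0` and
`ε(0) = S(0) + c·R(0) = 0` (with `c = kcf/v²`), a set of measure zero. -/
theorem cf_collision_iff_collision_ray
    (kcf v c : ℝ) (hkcf : 0 < kcf) (hv : 0 < v) (hc : c = kcf / v ^ 2)
    (R S : ℝ → ℝ)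
    (hRdiff : ∀ t, 0 ≤ t → DifferentiableAt ℝ R t)
    (hSdiff : ∀ t, 0 ≤ t → DifferentiableAt ℝ S t)
    (hR : ∀ t, 0 ≤ t → (R t, S t) ≠ (0, 0) →
      HasDerivAt R (kcf * R t * S t / (R t ^ 2 + S t ^ 2) + v ^ 2) t)
    (hS : ∀ t, 0 ≤ t → (R t, S t) ≠ (0, 0) →
      HasDerivAt S (-(kcf * R t ^ 2 / (R t ^ 2 + S t ^ 2))) t)
    (h0 : (R 0, S 0) ≠ (0, 0)) :
    (∃ τ : ℝ, 0 < τ ∧ R τ = 0 ∧ S τ = 0) ↔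
      (R 0 < 0 ∧ 0 < S 0 ∧ S 0 + c * R 0 = 0) := by
  have hcv : c * v ^ 2 = kcf := by
    rw [hc]
    field_simp
  constructor
  · rintro ⟨τ, hτ, hRτ, hSτ⟩
    have hRc : ContinuousOn R (Ici 0) := fun t ht => (hRdiff t ht).continuousAt.continuousWithinAt
    have hSc : ContinuousOn S (Ici 0) := fun t ht => (hSdiff t ht).continuousAt.continuousWithinAt
    obtain ⟨τ₀, hτ₀, hcol, hfirst⟩ :=
      exists_first_hitting_time (f := fun t => (R t, S t)) hτ.le
        ((hRc.prodMk hSc).mono Icc_subset_Ici_self) h0 (by simp [hRτ, hSτ])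
    have halive : ∀ t ∈ Ioo 0 τ₀, (R t, S t) ≠ (0, 0) := fun t ht =>
      hfirst t (Ioo_subset_Ico_self ht)
    obtain ⟨hS0, hray⟩ := nonneg_and_rayDeviation_eq_zero_of_collision hkcf.le hcv hτ₀.1.le
      (hRc.mono Icc_subset_Ici_self) (hSc.mono Icc_subset_Ici_self)
      (fun t ht => hR t ht.1.le (halive t ht)) (fun t ht => hS t ht.1.le (halive t ht))
      halive (congrArg Prod.fst hcol) (congrArg Prod.snd hcol)
    have hcpos : 0 < c := by
      rw [hc]
      positivity
    have hS0pos : 0 < S 0 := hS0.lt_of_ne fun hS0zero => h0 (by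
      rw [← hS0zero, show R 0 = 0 by nlinarith])
    exact ⟨by nlinarith, hS0pos, hray⟩
  · rintro ⟨hR0, -, hray⟩
    exact exists_collision_of_rayDeviation_eq_zero hv.ne' hcv hR hS hR0 hray
end

section
/- Suppose x follows the disturbed planar circular-field dynamics, and there exist constants dxmin, xmax > 0 such that ‖ẋ(t)‖ ≥ dxmin and ‖x(t)‖ ≤ xmax for all t ≥ 0, and the disturbance bound satisfies zmax ≤ dxmin²/xmax. If R(0) = x(0)·ẋ(0) ≥ 0, then for all t ≥ 0: R(t) ≥ 0 and ‖x(t)‖ ≥ ‖x(0)‖ (equivalently, the barrier V_B(t) = 1/‖x(t)‖² satisfies V_B(t) ≤ V_B(0)). -/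
/-!
With `R = ⟪x, ẋ⟫` and `ẍ = a_cf + z` one has `Ṙ = ‖ẋ‖² + ⟪x, z⟫ + ⟪x, a_cf⟫`. The disturbance is
dominated by the speed term, `|⟪x, z⟫| ≤ xmax * zmax ≤ dxmin² ≤ ‖ẋ‖²`, and the circular-field term
`kcf * R * ⟪x, ẋ × b⟫ / (‖x‖² ‖ẋ‖²)` is at least `-kcf * |R| / (‖x‖ ‖ẋ‖)`. On `[0, T]` the norm
`‖x‖` has a positive minimum `m`, so `Ṙ ≥ kcf / (m * dxmin) * R` wherever `R < 0`, and a
comparison argument keeps `R ≥ 0`. Finally `d/dt ‖x‖² = 2 R ≥ 0`.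
-/
open scoped RealInnerProductSpace

open Set Real

theorem nonneg_of_le_deriv_of_neg {f f' : ℝ → ℝ} {K a b : ℝ} (hf : ContinuousOn f (Icc a b))
    (hf' : ∀ t ∈ Ico a b, HasDerivWithinAt f (f' t) (Ici t) t) (ha : 0 ≤ f a)
    (bound : ∀ t ∈ Ico a b, f t < 0 → K * f t ≤ f' t) :
    ∀ ⦃t⦄, t ∈ Icc a b → 0 ≤ f t := by
  intro t ht
  set L := |K| + 1
  -- `-f` stays below every barrier `ε * exp (L * (s - b))`; `L > |K|` makes the comparison strict.
  suffices h : ∀ ε > 0, -f t ≤ ε by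
    simpa using le_of_forall_pos_le_add fun ε hε => (h ε hε).trans_eq (zero_add ε).symm
  intro ε hε
  set B : ℝ → ℝ := fun s => ε * exp (L * (s - b))
  have hB : ∀ s, HasDerivAt B (B s * L) s := fun s => by
    simpa [B, mul_assoc] using (((hasDerivAt_id s).sub_const b).const_mul L).exp.const_mul ε
  have hBpos : ∀ s, 0 < B s := fun s => by positivity
  have hfB : -f t ≤ B t := by
    refine image_le_of_deriv_right_lt_deriv_boundary (f := (-f ·)) hf.neg
      (fun s hs => (hf' s hs).neg) (by linarith [hBpos a]) hB (fun s hs hfs => ?_) ht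
    have hbound := bound s hs (by linarith [hBpos s])
    rw [show f s = -B s by linarith] at hbound
    calc -f' s ≤ K * B s := by linarith
      _ ≤ |K| * B s := mul_le_mul_of_nonneg_right (le_abs_self K) (hBpos s).le
      _ < B s * L := by linarith [hBpos s]
  calc -f t ≤ B t := hfB
    _ ≤ ε := mul_le_of_le_one_right hε.le
      (exp_le_one_iff.2 (mul_nonpos_of_nonneg_of_nonpos (by positivity) (by linarith [ht.2])))

theorem norm_le_norm_of_inner_deriv_nonneg {E : Type*} [NormedAddCommGroup E]
    [InnerProductSpace ℝ E] {x v : ℝ → E} {a b : ℝ} (hab : a ≤ b)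
    (hx : ∀ t ∈ Icc a b, HasDerivAt x (v t) t) (hxv : ∀ t ∈ Icc a b, 0 ≤ ⟪x t, v t⟫) :
    ‖x a‖ ≤ ‖x b‖ := by
  have hmono : MonotoneOn (‖x ·‖ ^ 2) (Icc a b) := by
    refine monotoneOn_of_hasDerivWithinAt_nonneg (f' := fun t => 2 * ⟪x t, v t⟫)
      (convex_Icc a b) (fun t ht => (hx t ht).norm_sq.continuousAt.continuousWithinAt)
      (fun t ht => ?_) (fun t ht => ?_) <;> rw [interior_Icc] at ht
    · exact (hx t (Ioo_subset_Icc_self ht)).norm_sq.hasDerivWithinAt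
    · exact mul_nonneg zero_le_two (hxv t (Ioo_subset_Icc_self ht))
  exact (pow_le_pow_iff_left₀ (norm_nonneg _) (norm_nonneg _) two_ne_zero).1
    (hmono (left_mem_Icc.2 hab) (right_mem_Icc.2 hab) hab)

theorem norm_cross_sq_s13 (a c : EuclideanSpace ℝ (Fin 3)) :
    ‖cross a c‖ ^ 2 = ‖a‖ ^ 2 * ‖c‖ ^ 2 - ⟪a, c⟫ ^ 2 := by
  simp only [EuclideanSpace.norm_sq_eq, PiLp.inner_apply, Fin.sum_univ_three, cross,
    EuclideanSpace.equiv, PiLp.continuousLinearEquiv_symm_apply, Matrix.cons_val_zero,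
    Matrix.cons_val_one, Matrix.cons_val, Real.norm_eq_abs, sq_abs, RCLike.inner_apply,
    conj_trivial]
  ring

theorem norm_cross_le (a c : EuclideanSpace ℝ (Fin 3)) : ‖cross a c‖ ≤ ‖a‖ * ‖c‖ := by
  refine (pow_le_pow_iff_left₀ (norm_nonneg _) (by positivity) two_ne_zero).1 ?_
  rw [norm_cross_sq_s13, mul_pow]
  linarith [sq_nonneg ⟪a, c⟫]

noncomputable def cfAccel (kcf : ℝ) (b x v : EuclideanSpace ℝ (Fin 3)) :
    EuclideanSpace ℝ (Fin 3) :=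
  (kcf / (‖x‖ ^ 2 * ‖v‖ ^ 2) * ⟪v, x⟫) • cross v b

theorem neg_mul_abs_inner_le_inner_cfAccel {kcf : ℝ} (hkcf : 0 ≤ kcf)
    {b : EuclideanSpace ℝ (Fin 3)} (hb : ‖b‖ = 1) (x v : EuclideanSpace ℝ (Fin 3)) :
    -(kcf / (‖x‖ * ‖v‖) * |⟪x, v⟫|) ≤ ⟪x, cfAccel kcf b x v⟫ := by
  rw [cfAccel, real_inner_smul_right, real_inner_comm x v]
  set c := kcf / (‖x‖ ^ 2 * ‖v‖ ^ 2)
  have hS : |⟪x, cross v b⟫| ≤ ‖x‖ * ‖v‖ := (abs_real_inner_le_norm _ _).trans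
    (by simpa [hb] using mul_le_mul_of_nonneg_left (norm_cross_le v b) (norm_nonneg x))
  have hc : c * (‖x‖ * ‖v‖) = kcf / (‖x‖ * ‖v‖) := by
    rcases eq_or_ne (‖x‖ * ‖v‖) 0 with h | h
    · simp [c, h, ← mul_pow]
    · simp only [c]
      field_simp
  calc -(kcf / (‖x‖ * ‖v‖) * |⟪x, v⟫|) = -(c * |⟪x, v⟫| * (‖x‖ * ‖v‖)) := by rw [← hc]; ring
    _ ≤ -(c * |⟪x, v⟫| * |⟪x, cross v b⟫|) := by gcongr
    _ = -|c * ⟪x, v⟫ * ⟪x, cross v b⟫| := by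
      rw [abs_mul, abs_mul, abs_of_nonneg (by positivity : 0 ≤ c)]
    _ ≤ c * ⟪x, v⟫ * ⟪x, cross v b⟫ := neg_abs_le _

theorem mul_inner_le_inner_cfAccel_add_inner_self {kcf K : ℝ} (hkcf : 0 ≤ kcf)
    {b x v z : EuclideanSpace ℝ (Fin 3)} (hb : ‖b‖ = 1) (hK : kcf / (‖x‖ * ‖v‖) ≤ K)
    (hz : |⟪x, z⟫| ≤ ‖v‖ ^ 2) (hxv : ⟪x, v⟫ ≤ 0) :
    K * ⟪x, v⟫ ≤ ⟪x, cfAccel kcf b x v + z⟫ + ⟪v, v⟫ := by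
  calc K * ⟪x, v⟫ = -(K * |⟪x, v⟫|) := by rw [abs_of_nonpos hxv]; ring
    _ ≤ -(kcf / (‖x‖ * ‖v‖) * |⟪x, v⟫|) := by gcongr
    _ ≤ ⟪x, cfAccel kcf b x v⟫ := neg_mul_abs_inner_le_inner_cfAccel hkcf hb x v
    _ ≤ ⟪x, cfAccel kcf b x v + z⟫ + ⟪v, v⟫ := by
      rw [inner_add_right, real_inner_self_eq_norm_sq]
      linarith [neg_abs_le ⟪x, z⟫]

theorem cf_disturbed_R_nonneg_general
    (kcf zmax dxmin xmax : ℝ) (hkcf : 0 < kcf)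
    (hdxmin : 0 < dxmin) (hxmax : 0 < xmax)
    (b : EuclideanSpace ℝ (Fin 3)) (hb : ‖b‖ = 1)
    (x v a z : ℝ → EuclideanSpace ℝ (Fin 3))
    (hx : ∀ t, 0 ≤ t → HasDerivAt x (v t) t)
    (hv : ∀ t, 0 ≤ t → HasDerivAt v (a t) t)
    (hxne : ∀ t, 0 ≤ t → x t ≠ 0)
    (hz : ∀ t, 0 ≤ t → ‖z t‖ ≤ zmax)
    (hacc : ∀ t, 0 ≤ t →
      a t = (kcf / (‖x t‖ ^ 2 * ‖v t‖ ^ 2) * ⟪v t, x t⟫) • cross (v t) b + z t)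
    (hvmin : ∀ t, 0 ≤ t → dxmin ≤ ‖v t‖)
    (hxbound : ∀ t, 0 ≤ t → ‖x t‖ ≤ xmax)
    (hzbound : zmax ≤ dxmin ^ 2 / xmax)
    (hR0 : 0 ≤ ⟪x 0, v 0⟫) :
    ∀ t, 0 ≤ t → 0 ≤ ⟪x t, v t⟫ ∧ ‖x 0‖ ≤ ‖x t‖ := by
  have hdist : ∀ t, 0 ≤ t → |⟪x t, z t⟫| ≤ ‖v t‖ ^ 2 := fun t ht =>
    calc |⟪x t, z t⟫| ≤ ‖x t‖ * ‖z t‖ := abs_real_inner_le_norm _ _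
      _ ≤ xmax * zmax := mul_le_mul (hxbound t ht) (hz t ht) (norm_nonneg _) hxmax.le
      _ ≤ dxmin ^ 2 := (le_div_iff₀' hxmax).1 hzbound
      _ ≤ ‖v t‖ ^ 2 := pow_le_pow_left₀ hdxmin.le (hvmin t ht) 2
  have hR : ∀ t, 0 ≤ t → 0 ≤ ⟪x t, v t⟫ := by
    intro T hT
    obtain ⟨m, hm, hmx⟩ := (isCompact_Icc (a := 0) (b := T)).exists_forall_le'
      (fun u hu => (hx u hu.1).continuousAt.norm.continuousWithinAt)
      (fun u hu => norm_pos_iff.2 (hxne u hu.1))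
    have hderiv : ∀ u ∈ Icc 0 T,
        HasDerivAt (fun t => ⟪x t, v t⟫) (⟪x u, a u⟫ + ⟪v u, v u⟫) u := fun u hu =>
      (hx u hu.1).inner ℝ (hv u hu.1)
    refine nonneg_of_le_deriv_of_neg (K := kcf / (m * dxmin))
      (fun u hu => (hderiv u hu).continuousAt.continuousWithinAt)
      (fun u hu => (hderiv u (Ico_subset_Icc_self hu)).hasDerivWithinAt) hR0
      (fun u hu hneg => ?_) ⟨hT, le_rfl⟩
    replace hu := Ico_subset_Icc_self hu
    have hxv : m * dxmin ≤ ‖x u‖ * ‖v u‖ :=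
      mul_le_mul (hmx u hu) (hvmin u hu.1) hdxmin.le (norm_nonneg _)
    have hau : a u = cfAccel kcf b (x u) (v u) + z u := hacc u hu.1
    rw [hau]
    exact mul_inner_le_inner_cfAccel_add_inner_self hkcf.le hb (by gcongr) (hdist u hu.1) hneg.le
  exact fun t ht => ⟨hR t ht, norm_le_norm_of_inner_deriv_nonneg ht (fun u hu => hx u hu.1)
    (fun u hu => hR u hu.1)⟩

/-- Lemma 5 of the paper: under the disturbed planar circular-field
dynamics `ẍ = (kcf/(‖x‖²‖ẋ‖²))·(ẋ·x)·(ẋ×b) + z` with `‖z‖ ≤ zmax ≤ dxmin²/xmax`,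
`‖ẋ‖ ≥ dxmin`, `‖x‖ ≤ xmax`: if `R(0) = x(0)·ẋ(0) ≥ 0`, then `R(t) ≥ 0` and
`‖x(t)‖ ≥ ‖x(0)‖` for all `t ≥ 0`. -/
theorem cf_disturbed_R_nonneg
    (kcf zmax dxmin xmax : ℝ) (hkcf : 0 < kcf) (hzmax : 0 ≤ zmax)
    (hdxmin : 0 < dxmin) (hxmax : 0 < xmax)
    (b : EuclideanSpace ℝ (Fin 3)) (hb : ‖b‖ = 1)
    (x v a z : ℝ → EuclideanSpace ℝ (Fin 3))
    (hx : ∀ t, 0 ≤ t → HasDerivAt x (v t) t)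
    (hv : ∀ t, 0 ≤ t → HasDerivAt v (a t) t)
    (hxne : ∀ t, 0 ≤ t → x t ≠ 0)
    (hvne : ∀ t, 0 ≤ t → v t ≠ 0)
    (hbx : ∀ t, 0 ≤ t → ⟪b, x t⟫ = 0)
    (hbv : ∀ t, 0 ≤ t → ⟪b, v t⟫ = 0)
    (hbz : ∀ t, 0 ≤ t → ⟪b, z t⟫ = 0)
    (hz : ∀ t, 0 ≤ t → ‖z t‖ ≤ zmax)
    (hacc : ∀ t, 0 ≤ t →
      a t = (kcf / (‖x t‖ ^ 2 * ‖v t‖ ^ 2) * ⟪v t, x t⟫) • cross (v t) b + z t)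
    (hvmin : ∀ t, 0 ≤ t → dxmin ≤ ‖v t‖)
    (hxbound : ∀ t, 0 ≤ t → ‖x t‖ ≤ xmax)
    (hzbound : zmax ≤ dxmin ^ 2 / xmax)
    (hR0 : 0 ≤ ⟪x 0, v 0⟫) :
    ∀ t, 0 ≤ t → 0 ≤ ⟪x t, v t⟫ ∧ ‖x 0‖ ≤ ‖x t‖ :=
  cf_disturbed_R_nonneg_general kcf zmax dxmin xmax hkcf hdxmin hxmax b hb x v a z hx hv hxne hz
    hacc hvmin hxbound hzbound hR0
end

section
/- Let x : [0,∞) → ℝ³ be twice differentiable, F : [0,∞) → ℝ³ satisfy F(t)·ẋ(t) = 0 for all t ≥ 0, and kVLC : [0,∞) → ℝ satisfy kVLC(t) ≥ 0 for all t. Suppose ẍ(t) = F(t) + kVLC(t)·F_VLC(t) for all t ≥ 0. If ‖ẋ(0)‖ ≤ dxmax, then ‖ẋ(t)‖ ≤ dxmax for all t ≥ 0. -/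
/-!
While the speed exceeds `dxmax`, the obstacle force `F` does no work and the VLC force
`−kv·(ẋ − ν·v_d)` does nonpositive work, because the scaled desired velocity `ν·v_d` has norm at
most `dxmax < ‖ẋ‖`. Hence `‖ẋ‖²` cannot increase above `dxmax²`, which a fencing argument turns
into the invariance of the ball of radius `dxmax`.
-/

open scoped RealInnerProductSpace
open Classical

/-- The desired velocity of the velocity-limiting controller (VLC). -/
noncomputable def vd (kp kv : ℝ) (xg p : EuclideanSpace ℝ (Fin 3)) :
    EuclideanSpace ℝ (Fin 3) :=
  (kp / kv) • (xg - p)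

/-- The VLC scaling factor `ν = min(1, dxmax/‖v_d‖)` (with `ν = 1` when `v_d = 0`). -/
noncomputable def nu (dxmax : ℝ) (w : EuclideanSpace ℝ (Fin 3)) : ℝ :=
  if w = 0 then 1 else min 1 (dxmax / ‖w‖)

/-- The VLC force `F_VLC = −kv·(ẋ − ν·v_d)`. -/
noncomputable def FVLC (kp kv dxmax : ℝ) (xg p w : EuclideanSpace ℝ (Fin 3)) :
    EuclideanSpace ℝ (Fin 3) :=
  (-kv) • (w - nu dxmax (vd kp kv xg p) • vd kp kv xg p)

open Set

theorem image_le_of_deriv_right_nonpos_of_gt {f f' : ℝ → ℝ} {a b C : ℝ}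
    (hf : ContinuousOn f (Icc a b)) (hf' : ∀ x ∈ Ico a b, HasDerivWithinAt f (f' x) (Ici x) x)
    (ha : f a ≤ C) (bound : ∀ x ∈ Ico a b, C < f x → f' x ≤ 0) :
    ∀ ⦃x⦄, x ∈ Icc a b → f x ≤ C := by
  intro x hx
  have hlen : 0 < x - a + 1 := by linarith [hx.1]
  -- Fence with the lines `C + ε (y - a + 1)`, which start strictly above `f a`.
  have fence : ∀ ε > 0, f x ≤ C + ε * (x - a + 1) := by
    intro ε hε
    refine image_le_of_deriv_right_lt_deriv_boundary (B := fun y => C + ε * (y - a + 1))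
      (B' := fun _ => ε) hf hf' (by nlinarith) (fun y => ?_) (fun y hy hfy => ?_) hx
    · simpa using (((hasDerivAt_id y).sub_const a).add_const 1).const_mul ε |>.const_add C
    · have : C < f y := by rw [hfy]; nlinarith [hy.1]
      linarith [bound y hy this]
  refine le_of_forall_pos_le_add fun δ hδ => ?_
  simpa [div_mul_cancel₀ δ hlen.ne'] using fence (δ / (x - a + 1)) (by positivity)

theorem nu_nonneg {dxmax : ℝ} (hd : 0 ≤ dxmax) (w : EuclideanSpace ℝ (Fin 3)) :
    0 ≤ nu dxmax w := by
  unfold nu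
  split_ifs
  · exact zero_le_one
  · positivity

theorem nu_mul_norm_le {dxmax : ℝ} (hd : 0 ≤ dxmax) (w : EuclideanSpace ℝ (Fin 3)) :
    nu dxmax w * ‖w‖ ≤ dxmax := by
  unfold nu
  split_ifs with hw
  · simpa [hw] using hd
  · calc min 1 (dxmax / ‖w‖) * ‖w‖ ≤ dxmax / ‖w‖ * ‖w‖ := by gcongr; exact min_le_right _ _
      _ = dxmax := div_mul_cancel₀ _ (norm_ne_zero_iff.mpr hw)

theorem inner_nu_smul_le {dxmax : ℝ} (hd : 0 ≤ dxmax) (w u : EuclideanSpace ℝ (Fin 3)) :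
    ⟪w, nu dxmax u • u⟫ ≤ dxmax * ‖w‖ :=
  calc ⟪w, nu dxmax u • u⟫ ≤ ‖w‖ * ‖nu dxmax u • u‖ := real_inner_le_norm _ _
    _ = ‖w‖ * (nu dxmax u * ‖u‖) := by rw [norm_smul, Real.norm_of_nonneg (nu_nonneg hd u)]
    _ ≤ ‖w‖ * dxmax := by gcongr; exact nu_mul_norm_le hd u
    _ = dxmax * ‖w‖ := mul_comm _ _

theorem inner_FVLC_nonpos (kp : ℝ) {kv dxmax : ℝ} (hkv : 0 ≤ kv) (hd : 0 ≤ dxmax)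
    (xg p : EuclideanSpace ℝ (Fin 3)) {w : EuclideanSpace ℝ (Fin 3)} (hw : dxmax ≤ ‖w‖) :
    ⟪w, FVLC kp kv dxmax xg p w⟫ ≤ 0 := by
  have hdrive := inner_nu_smul_le hd w (vd kp kv xg p)
  rw [FVLC, real_inner_smul_right, inner_sub_right, real_inner_self_eq_norm_sq]
  nlinarith [mul_le_mul_of_nonneg_left hw (norm_nonneg w)]

theorem vlc_max_speed_invariant_general
    (kp kv dxmax : ℝ) (hkv : 0 < kv)
    (xg : EuclideanSpace ℝ (Fin 3))
    (x v a F : ℝ → EuclideanSpace ℝ (Fin 3)) (kVLC : ℝ → ℝ)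
    (hv : ∀ t, 0 ≤ t → HasDerivAt v (a t) t)
    (hF : ∀ t, 0 ≤ t → ⟪F t, v t⟫ = 0)
    (hk : ∀ t, 0 ≤ t → 0 ≤ kVLC t)
    (hacc : ∀ t, 0 ≤ t →
      a t = F t + kVLC t • FVLC kp kv dxmax xg (x t) (v t))
    (h0 : ‖v 0‖ ≤ dxmax) :
    ∀ t, 0 ≤ t → ‖v t‖ ≤ dxmax := by
  have hd : 0 ≤ dxmax := (norm_nonneg _).trans h0
  have hspeed : ∀ s, 0 ≤ s → HasDerivAt (‖v ·‖ ^ 2) (2 * ⟪v s, a s⟫) s :=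
    fun s hs => (hv s hs).norm_sq
  have hwork : ∀ s, 0 ≤ s → dxmax ^ 2 < ‖v s‖ ^ 2 → 2 * ⟪v s, a s⟫ ≤ 0 := by
    intro s hs hfast
    have hw : dxmax ≤ ‖v s‖ := (lt_of_pow_lt_pow_left₀ 2 (norm_nonneg _) hfast).le
    rw [hacc s hs, inner_add_right, real_inner_comm, hF s hs, real_inner_smul_right]
    nlinarith [hk s hs, inner_FVLC_nonpos kp hkv.le hd xg (x s) hw]
  intro t ht
  have hsq : ‖v t‖ ^ 2 ≤ dxmax ^ 2 :=
    image_le_of_deriv_right_nonpos_of_gt (f := (‖v ·‖ ^ 2))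
      (fun s hs => (hspeed s hs.1).continuousAt.continuousWithinAt)
      (fun s hs => (hspeed s hs.1).hasDerivWithinAt) (by gcongr)
      (fun s hs => hwork s hs.1) ⟨ht, le_rfl⟩
  exact (pow_le_pow_iff_left₀ (norm_nonneg _) hd two_ne_zero).mp hsq

/-- Proposition 1 of the paper: under the combined dynamics
`ẍ = F + kVLC·F_VLC` with `F ⊥ ẋ` and `kVLC ≥ 0`, if `‖ẋ(0)‖ ≤ dxmax` then
`‖ẋ(t)‖ ≤ dxmax` for all `t ≥ 0`. -/
theorem vlc_max_speed_invariant
    (kp kv dxmax : ℝ) (hkp : 0 < kp) (hkv : 0 < kv) (hdxmax : 0 < dxmax)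
    (xg : EuclideanSpace ℝ (Fin 3))
    (x v a F : ℝ → EuclideanSpace ℝ (Fin 3)) (kVLC : ℝ → ℝ)
    (hx : ∀ t, 0 ≤ t → HasDerivAt x (v t) t)
    (hv : ∀ t, 0 ≤ t → HasDerivAt v (a t) t)
    (hF : ∀ t, 0 ≤ t → ⟪F t, v t⟫ = 0)
    (hk : ∀ t, 0 ≤ t → 0 ≤ kVLC t)
    (hacc : ∀ t, 0 ≤ t →
      a t = F t + kVLC t • FVLC kp kv dxmax xg (x t) (v t))
    (h0 : ‖v 0‖ ≤ dxmax) :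
    ∀ t, 0 ≤ t → ‖v t‖ ≤ dxmax :=
  vlc_max_speed_invariant_general kp kv dxmax hkv xg x v a F kVLC hv hF hk hacc h0
end

section
/- Let x : [0,∞) → ℝ³ be twice differentiable, F : [0,∞) → ℝ³ satisfy F(t)·ẋ(t) = 0 for all t, let dxmin > 0 and ξ > 0, and define kVLC(t) = 0 if (ẋ(t)·F_VLC(t) ≤ 0 and ‖ẋ(t)‖ ≤ dxmin and ‖xg − x(t)‖ > ξ), and kVLC(t) = 1 otherwise. Suppose ẍ(t) = F(t) + kVLC(t)·F_VLC(t) for all t, and let τ > 0 be such that ‖xg − x(t)‖ > ξ for all t ∈ [0, τ]. If ‖ẋ(0)‖ > dxmin, then ‖ẋ(t)‖ ≥ dxmin for all t ∈ [0, τ]. -/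
open scoped RealInnerProductSpace
open Classical

/-!
The squared speed `‖ẋ‖²` has derivative `2 ẋ·ẍ = 2 kVLC (ẋ·F_VLC)`, because the avoidance
force does no work. While the speed is at most `dxmin` (and the goal is farther than `ξ`),
the switching rule keeps `F_VLC` only when `ẋ·F_VLC > 0`, so this derivative is nonnegative.
A function whose derivative is nonnegative wherever it lies below a level `c` cannot fall
below `c` once it starts above it.
-/

open Set

theorem le_on_Icc_of_hasDerivAt_nonneg_below {g g' : ℝ → ℝ} {a b c : ℝ}
    (hcont : ContinuousOn g (Icc a b)) (hder : ∀ t ∈ Ioo a b, HasDerivAt g (g' t) t)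
    (hbelow : ∀ t ∈ Ioo a b, g t < c → 0 ≤ g' t) (ha : c ≤ g a) :
    ∀ t ∈ Icc a b, c ≤ g t := by
  intro t ht
  by_contra! hgt
  -- `s` is the last time in `[a, t]` at which `g` is still at least `c`.
  set S := Icc a t ∩ g ⁻¹' Ici c
  have hS : IsClosed S :=
    (hcont.mono (Icc_subset_Icc_right ht.2)).preimage_isClosed_of_isClosed isClosed_Icc
      isClosed_Ici
  have haS : a ∈ S := ⟨⟨le_rfl, ht.1⟩, ha⟩
  have hSbdd : BddAbove S := ⟨t, fun u hu => hu.1.2⟩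
  set s := sSup S
  obtain ⟨⟨has, hst⟩, hgs⟩ : s ∈ S := hS.csSup_mem ⟨a, haS⟩ hSbdd
  have hs_lt : s < t := hst.lt_of_ne fun h => (h ▸ hgt).not_ge hgs
  have hsub : Icc s t ⊆ Icc a b := Icc_subset_Icc has ht.2
  have hmono : MonotoneOn g (Icc s t) := by
    refine monotoneOn_of_hasDerivWithinAt_nonneg (f' := g') (convex_Icc s t) (hcont.mono hsub)
      (fun u hu => ?_) fun u hu => ?_
    all_goals
      rw [interior_Icc] at hu
      have hu' : u ∈ Ioo a b := ⟨has.trans_lt hu.1, hu.2.trans_le ht.2⟩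
    · exact (hder u hu').hasDerivWithinAt
    · refine hbelow u hu' (not_le.mp fun hcu => hu.1.not_ge ?_)
      exact le_csSup hSbdd ⟨⟨has.trans hu.1.le, hu.2.le⟩, hcu⟩
  exact hgt.not_ge (hgs.trans (hmono ⟨le_rfl, hs_lt.le⟩ ⟨hs_lt.le, le_rfl⟩ hs_lt.le))

theorem inner_add_switched_smul_nonneg {E : Type*} [NormedAddCommGroup E]
    [InnerProductSpace ℝ E] {v F G : E} {P : Prop} [Decidable P]
    (hF : ⟪F, v⟫ = 0) (hP : P) :
    0 ≤ ⟪v, F + (if ⟪v, G⟫ ≤ 0 ∧ P then (0 : ℝ) else 1) • G⟫ := by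
  rw [inner_add_right, real_inner_comm, hF, zero_add, real_inner_smul_right]
  split_ifs with h
  · simp
  · have : 0 < ⟪v, G⟫ := not_le.mp fun hle => h ⟨hle, hP⟩
    linarith

theorem vlc_min_speed_maintained_general
    (kp kv dxmax dxmin ξ : ℝ)
    (hdxmin : 0 < dxmin)
    (xg : EuclideanSpace ℝ (Fin 3))
    (x v a F : ℝ → EuclideanSpace ℝ (Fin 3)) (kVLC : ℝ → ℝ)
    (hv : ∀ t, 0 ≤ t → HasDerivAt v (a t) t)
    (hF : ∀ t, 0 ≤ t → ⟪F t, v t⟫ = 0)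
    (hk : ∀ t, kVLC t =
      if ⟪v t, FVLC kp kv dxmax xg (x t) (v t)⟫ ≤ 0 ∧ ‖v t‖ ≤ dxmin ∧ ξ < ‖xg - x t‖
      then 0 else 1)
    (hacc : ∀ t, 0 ≤ t →
      a t = F t + kVLC t • FVLC kp kv dxmax xg (x t) (v t))
    (τ : ℝ)
    (hfar : ∀ t ∈ Set.Icc (0 : ℝ) τ, ξ < ‖xg - x t‖)
    (h0 : dxmin < ‖v 0‖) :
    ∀ t ∈ Set.Icc (0 : ℝ) τ, dxmin ≤ ‖v t‖ := by
  have hsq : ∀ t ∈ Icc 0 τ, HasDerivAt (‖v ·‖ ^ 2) (2 * ⟪v t, a t⟫) t :=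
    fun t ht => (hv t ht.1).norm_sq
  have hpower : ∀ t ∈ Ioo 0 τ, ‖v t‖ ^ 2 < dxmin ^ 2 → 0 ≤ 2 * ⟪v t, a t⟫ := by
    intro t ht hslow
    have hslow' : ‖v t‖ ≤ dxmin :=
      ((pow_lt_pow_iff_left₀ (norm_nonneg _) hdxmin.le two_ne_zero).mp hslow).le
    refine mul_nonneg zero_le_two ?_
    rw [hacc t ht.1.le, hk t]
    exact inner_add_switched_smul_nonneg (hF t ht.1.le)
      ⟨hslow', hfar t (Ioo_subset_Icc_self ht)⟩
  intro t ht
  refine (pow_le_pow_iff_left₀ hdxmin.le (norm_nonneg _) two_ne_zero).mp ?_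
  exact le_on_Icc_of_hasDerivAt_nonneg_below
    (fun u hu => (hsq u hu).continuousAt.continuousWithinAt)
    (fun u hu => hsq u (Ioo_subset_Icc_self hu)) hpower
    (pow_le_pow_left₀ hdxmin.le h0.le 2) t ht

/-- Proposition 2 of the paper: with the goal-force scaling
`kVLC(t) = 0` iff (`ẋ·F_VLC ≤ 0`, `‖ẋ‖ ≤ dxmin` and `‖xg − x‖ > ξ`), and `kVLC(t) = 1`
otherwise, under `ẍ = F + kVLC·F_VLC` with `F ⊥ ẋ`: if `‖xg − x(t)‖ > ξ` on `[0, τ]`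
and `‖ẋ(0)‖ > dxmin`, then `‖ẋ(t)‖ ≥ dxmin` on `[0, τ]`. -/
theorem vlc_min_speed_maintained
    (kp kv dxmax dxmin ξ : ℝ) (hkp : 0 < kp) (hkv : 0 < kv) (hdxmax : 0 < dxmax)
    (hdxmin : 0 < dxmin) (hξ : 0 < ξ)
    (xg : EuclideanSpace ℝ (Fin 3))
    (x v a F : ℝ → EuclideanSpace ℝ (Fin 3)) (kVLC : ℝ → ℝ)
    (hx : ∀ t, 0 ≤ t → HasDerivAt x (v t) t)
    (hv : ∀ t, 0 ≤ t → HasDerivAt v (a t) t)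
    (hF : ∀ t, 0 ≤ t → ⟪F t, v t⟫ = 0)
    (hk : ∀ t, kVLC t =
      if ⟪v t, FVLC kp kv dxmax xg (x t) (v t)⟫ ≤ 0 ∧ ‖v t‖ ≤ dxmin ∧ ξ < ‖xg - x t‖
      then 0 else 1)
    (hacc : ∀ t, 0 ≤ t →
      a t = F t + kVLC t • FVLC kp kv dxmax xg (x t) (v t))
    (τ : ℝ) (hτ : 0 < τ)
    (hfar : ∀ t ∈ Set.Icc (0 : ℝ) τ, ξ < ‖xg - x t‖)
    (h0 : dxmin < ‖v 0‖) :
    ∀ t ∈ Set.Icc (0 : ℝ) τ, dxmin ≤ ‖v t‖ :=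
  vlc_min_speed_maintained_general kp kv dxmax dxmin ξ hdxmin xg x v a F kVLC hv hF hk hacc τ hfar
    h0
end
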